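/- arXiv:2202.03841 — 4 statements merged into one kernel-verified Lean document; each statement's English description precedes it below -/
import Mathlib

section
/- Let N* : ℝ^d → ℝ be a ReLU network of depth L ≥ 2 and width at most n. Then there exists a ReLU network N : ℝ^d → ℝ of width at most 2(d + L − 1) and depth at most (2n)^{L−1} + 2 such that N(x) = N*(x) for every x ∈ ℝ^d. -/
open scoped BigOperators

noncomputable section

/-- The ReLU activation function. -/
def relu (x : ℝ) : ℝ := max 0 x

/-- One affine layer of a neural network: a weight matrix and a bias vector. -/
structure Layer (nin nout : ℕ) where
  W : Matrix (Fin nout) (Fin nin) ℝ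
  b : Fin nout → ℝ

/-- The affine map computed by a layer. -/
def Layer.affine {nin nout : ℕ} (l : Layer nin nout) (x : Fin nin → ℝ) : Fin nout → ℝ :=
  fun i => (∑ j, l.W i j * x j) + l.b i

/-- A ReLU network: a nonempty sequence of affine layers; ReLU is applied after
every layer except the last one. -/
inductive Net : ℕ → ℕ → Type
  | last {nin nout : ℕ} : Layer nin nout → Net nin nout
  | cons {nin k nout : ℕ} : Layer nin k → Net k nout → Net nin nout

namespace Net

/-- Evaluation of a ReLU network. -/
def eval : {nin nout : ℕ} → Net nin nout → (Fin nin → ℝ) → (Fin nout → ℝ)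
  | _, _, .last l, x => l.affine x
  | _, _, .cons l rest, x => rest.eval (fun i => relu (l.affine x i))

/-- The depth (number of layers) of a network. -/
def depth : {nin nout : ℕ} → Net nin nout → ℕ
  | _, _, .last _ => 1
  | _, _, .cons _ rest => rest.depth + 1

/-- The width of a network: the maximum of the input dimension and all
intermediate layer dimensions. -/
def width : {nin nout : ℕ} → Net nin nout → ℕ
  | nin, _, .last _ => nin
  | nin, _, .cons _ rest => max nin rest.width

/-- The number of parameters of a network: the total number of entries of all
weight matrices and bias vectors. -/
def params : {nin nout : ℕ} → Net nin nout → ℕ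
  | nin, nout, .last _ => nout * nin + nout
  | nin, _, .cons (k := k) _ rest => (k * nin + k) + rest.params

/-- All weights (matrix entries and biases) of the network lie in the set `s`. -/
def weightsIn (s : Set ℝ) : {nin nout : ℕ} → Net nin nout → Prop
  | _, _, .last l => (∀ i j, l.W i j ∈ s) ∧ (∀ i, l.b i ∈ s)
  | _, _, .cons l rest => ((∀ i j, l.W i j ∈ s) ∧ (∀ i, l.b i ∈ s)) ∧ rest.weightsIn s

/-- The bias vector of the output layer of a network. -/
def lastBias : {nin nout : ℕ} → Net nin nout → (Fin nout → ℝ)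
  | _, _, .last l => l.b
  | _, _, .cons _ rest => rest.lastBias

end Net

/-- `BIN a b m` is the integer formed by bits `a` through `b` (1-indexed from the
least significant bit) of the binary representation of `m`. -/
def BIN (a b m : ℕ) : ℕ := (m / 2^(a-1)) % 2^(b - a + 1)

end


noncomputable section NSim

lemma relu_nonneg (z : ℝ) : 0 ≤ relu z := le_max_left 0 z
lemma relu_of_nonneg {z : ℝ} (h : 0 ≤ z) : relu z = z := max_eq_right h
lemma relu_relu (z : ℝ) : relu (relu z) = relu z := relu_of_nonneg (relu_nonneg z)
lemma relu_sub_relu_neg (z : ℝ) : relu z - relu (-z) = z := by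
  rcases le_total 0 z with h | h
  · rw [relu_of_nonneg h, relu, max_eq_left (by linarith)]; ring
  · rw [relu, max_eq_left h, relu_of_nonneg (by linarith)]; ring
lemma relu_add_relu_neg (z : ℝ) : relu z + relu (-z) = |z| := by
  rcases le_total 0 z with h | h
  · rw [relu_of_nonneg h, relu, max_eq_left (by linarith), abs_of_nonneg h]; ring
  · rw [relu, max_eq_left h, relu_of_nonneg (by linarith), abs_of_nonpos h]; ring
lemma relu_le_abs (z : ℝ) : relu z ≤ |z| := max_le (abs_nonneg z) (le_abs_self z)

def Vx {d : ℕ} (x : Fin d → ℝ) : ℝ := ∑ t, |x t|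

lemma Vx_nonneg {d : ℕ} (x : Fin d → ℝ) : 0 ≤ Vx x :=
  Finset.sum_nonneg fun _ _ => abs_nonneg _

lemma abs_le_Vx {d : ℕ} (x : Fin d → ℝ) (t : Fin d) : |x t| ≤ Vx x := by
  unfold Vx
  exact Finset.single_le_sum (f := fun u => |x u|) (fun _ _ => abs_nonneg _) (Finset.mem_univ t)

/-- The ℕ-indexed state encoding: channels [0,d) hold relu(xᵢ), [d,2d) hold relu(-xᵢ),
and channel 2d+ρ holds the slot value `a ρ`. -/
def encN (d : ℕ) (x : Fin d → ℝ) (a : ℕ → ℝ) : ℕ → ℝ := fun v =>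
  if h : v < d then relu (x ⟨v, h⟩)
  else if h2 : v - d < d then relu (-x ⟨v - d, h2⟩)
  else a (v - 2 * d)

def enc (d m : ℕ) (x : Fin d → ℝ) (a : ℕ → ℝ) : Fin m → ℝ := fun j => encN d x a j.val

/-- A row pattern reading the x-channels with coefficients f (positive part)
and g (negative part); zero elsewhere. -/
def patN (d : ℕ) (f g : Fin d → ℝ) : ℕ → ℝ := fun v =>
  if h : v < d then f ⟨v, h⟩ else if h2 : v - d < d then g ⟨v - d, h2⟩ else 0

lemma encN_slot (d : ℕ) (x : Fin d → ℝ) (a : ℕ → ℝ) (r : ℕ) :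
    encN d x a (2 * d + r) = a r := by
  unfold encN
  rw [dif_neg (by omega), dif_neg (by omega)]
  congr 1; omega

lemma encN_nonneg {d : ℕ} (x : Fin d → ℝ) {a : ℕ → ℝ} (ha : ∀ ρ, 0 ≤ a ρ) (v : ℕ) :
    0 ≤ encN d x a v := by
  unfold encN
  split_ifs with h h2
  · exact relu_nonneg _
  · exact relu_nonneg _
  · exact ha _

/-- Key reindexing lemma: dot product of a pattern row with an encoded state. -/
lemma sum_pat_enc {d m : ℕ} (hdm : 2 * d ≤ m) (f g : Fin d → ℝ) (x : Fin d → ℝ) (a : ℕ → ℝ) :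
    ∑ j : Fin m, patN d f g j.val * encN d x a j.val
      = ∑ t : Fin d, (f t * relu (x t) + g t * relu (-x t)) := by
  have h1 : ∑ j : Fin m, patN d f g j.val * encN d x a j.val
      = ∑ v ∈ Finset.range m, patN d f g v * encN d x a v :=
    Fin.sum_univ_eq_sum_range (fun v => patN d f g v * encN d x a v) m
  have h2 : ∑ v ∈ Finset.range (2*d), patN d f g v * encN d x a v
      = ∑ v ∈ Finset.range m, patN d f g v * encN d x a v := by
    apply Finset.sum_subset (Finset.range_subset_range.mpr hdm)
    intro v _ hv
    rw [Finset.mem_range, not_lt] at hv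
    have hv1 : ¬ (v < d) := by omega
    have hv2 : ¬ (v - d < d) := by omega
    have : patN d f g v = 0 := by unfold patN; rw [dif_neg hv1, dif_neg hv2]
    rw [this, zero_mul]
  have h3 : ∑ v ∈ Finset.range (2*d), patN d f g v * encN d x a v
      = (∑ v ∈ Finset.range d, patN d f g v * encN d x a v)
        + ∑ v ∈ Finset.Ico d (2*d), patN d f g v * encN d x a v := by
    have hdd : d ≤ 2 * d := by omega
    rw [Finset.range_eq_Ico, ← Finset.sum_Ico_consecutive _ (Nat.zero_le d) hdd,
      ← Finset.range_eq_Ico]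
  have h4 : ∑ v ∈ Finset.Ico d (2*d), patN d f g v * encN d x a v
      = ∑ v ∈ Finset.range d, patN d f g (d + v) * encN d x a (d + v) := by
    have h2dd : 2*d - d = d := by omega
    rw [Finset.sum_Ico_eq_sum_range, h2dd]
  have h5 : ∀ v ∈ Finset.range d, patN d f g v * encN d x a v
      = (fun t : ℕ => if h : t < d then f ⟨t,h⟩ * relu (x ⟨t,h⟩) else 0) v := by
    intro v hv
    rw [Finset.mem_range] at hv
    simp only [patN, encN, dif_pos hv]
  have h6 : ∀ v ∈ Finset.range d, patN d f g (d + v) * encN d x a (d + v)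
      = (fun t : ℕ => if h : t < d then g ⟨t,h⟩ * relu (-x ⟨t,h⟩) else 0) v := by
    intro v hv
    rw [Finset.mem_range] at hv
    have hv1 : ¬ (d + v < d) := by omega
    have hv2 : d + v - d < d := by omega
    have hv3 : d + v - d = v := by omega
    simp only [patN, encN, dif_neg hv1, dif_pos hv2, dif_pos hv]
    simp_rw [hv3]
  have h7 : ∑ t : Fin d, (f t * relu (x t) + g t * relu (-x t))
      = ∑ v ∈ Finset.range d,
          ((fun t : ℕ => if h : t < d then f ⟨t,h⟩ * relu (x ⟨t,h⟩) else 0) v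
           + (fun t : ℕ => if h : t < d then g ⟨t,h⟩ * relu (-x ⟨t,h⟩) else 0) v) := by
    rw [← Fin.sum_univ_eq_sum_range (fun v =>
      (fun t : ℕ => if h : t < d then f ⟨t,h⟩ * relu (x ⟨t,h⟩) else 0) v
      + (fun t : ℕ => if h : t < d then g ⟨t,h⟩ * relu (-x ⟨t,h⟩) else 0) v) d]
    apply Finset.sum_congr rfl
    intro t _
    simp [t.isLt]
  rw [h1, ← h2, h3, h4, Finset.sum_congr rfl h5, Finset.sum_congr rfl h6, h7,
    ← Finset.sum_add_distrib]

section Layers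

variable {d m : ℕ}

def applyL {m : ℕ} (l : Layer m m) (s : Fin m → ℝ) : Fin m → ℝ := fun i => relu (l.affine s i)

def stRun {m : ℕ} : List (Layer m m) → (Fin m → ℝ) → (Fin m → ℝ)
  | [], s => s
  | (l :: P), s => stRun P (applyL l s)

lemma stRun_append {m : ℕ} (P Q : List (Layer m m)) (s : Fin m → ℝ) :
    stRun (P ++ Q) s = stRun Q (stRun P s) := by
  induction P generalizing s with
  | nil => rfl
  | cons l P ih => simp only [List.cons_append, stRun]; exact ih _

lemma dot_e (i : Fin m) (s : Fin m → ℝ) :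
    ∑ j, (if j = i then (1:ℝ) else 0) * s j = s i := by simp [ite_mul]

lemma dot_add (v w : Fin m → ℝ) (s : Fin m → ℝ) :
    ∑ j, (v j + w j) * s j = (∑ j, v j * s j) + ∑ j, w j * s j := by
  simp [add_mul, Finset.sum_add_distrib]

lemma dot_sub (v w : Fin m → ℝ) (s : Fin m → ℝ) :
    ∑ j, (v j - w j) * s j = (∑ j, v j * s j) - ∑ j, w j * s j := by
  simp [sub_mul, Finset.sum_sub_distrib]

lemma dot_smul (c : ℝ) (v s : Fin m → ℝ) :
    ∑ j, (c * v j) * s j = c * ∑ j, v j * s j := by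
  simp [mul_assoc, Finset.mul_sum]

lemma sum_pat_one_enc (hdm : 2*d ≤ m) (x : Fin d → ℝ) (a : ℕ → ℝ) :
    ∑ j : Fin m, patN d (fun _ => (1:ℝ)) (fun _ => (1:ℝ)) j.val * enc d m x a j = Vx x := by
  show ∑ j : Fin m, patN d _ _ j.val * encN d x a j.val = Vx x
  rw [sum_pat_enc hdm]
  unfold Vx
  apply Finset.sum_congr rfl
  intro t _
  rw [one_mul, one_mul, relu_add_relu_neg]

lemma sum_pat_w_enc (hdm : 2*d ≤ m) (w : Fin d → ℝ) (x : Fin d → ℝ) (a : ℕ → ℝ) :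
    ∑ j : Fin m, patN d w (fun t => -w t) j.val * enc d m x a j = ∑ t, w t * x t := by
  show ∑ j : Fin m, patN d _ _ j.val * encN d x a j.val = _
  rw [sum_pat_enc hdm]
  apply Finset.sum_congr rfl
  intro t _
  calc w t * relu (x t) + (-w t) * relu (-x t)
      = w t * (relu (x t) - relu (-x t)) := by ring
    _ = w t * x t := by rw [relu_sub_relu_neg]

/-- slot channel -/
def ch (d m r : ℕ) (h : 2*d + r < m) : Fin m := ⟨2*d + r, h⟩

lemma enc_ch (x : Fin d → ℝ) (a : ℕ → ℝ) (r : ℕ) (h : 2*d + r < m) :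
    enc d m x a (ch d m r h) = a r := encN_slot d x a r

lemma ch_ne (r r' : ℕ) (h : 2*d + r < m) (h' : 2*d + r' < m) (hne : r ≠ r') :
    ch d m r h ≠ ch d m r' h' := by
  simp only [ch, ne_eq, Fin.mk.injEq]
  omega

/-- The push layer: tgt += c * src + |c|*G*(1+V(x)); src := 0; others unchanged. -/
def pushL (d m rs rt : ℕ) (hs : 2*d + rs < m) (ht : 2*d + rt < m) (c G : ℝ) : Layer m m where
  W := Matrix.of fun i j =>
    if i = ch d m rt ht then
      (if j = ch d m rt ht then 1 else 0) + c * (if j = ch d m rs hs then 1 else 0)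
        + (|c| * G) * patN d (fun _ => 1) (fun _ => 1) j.val
    else if i = ch d m rs hs then 0
    else if j = i then 1 else 0
  b := fun i => if i = ch d m rt ht then |c| * G else 0

/-- generic fact: non-touched channels of an encoded state pass through relu unchanged -/
lemma relu_enc_other {x : Fin d → ℝ} {a a' : ℕ → ℝ} (ha : ∀ ρ, 0 ≤ a ρ) (j : Fin m)
    (hagree : ∀ ρ, 2*d + ρ = j.val → a' ρ = a ρ) :
    relu (enc d m x a j) = enc d m x a' j := by
  show relu (encN d x a j.val) = encN d x a' j.val
  unfold encN
  by_cases h1 : j.val < d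
  · rw [dif_pos h1, dif_pos h1, relu_relu]
  · rw [dif_neg h1, dif_neg h1]
    by_cases h2 : j.val - d < d
    · rw [dif_pos h2, dif_pos h2, relu_relu]
    · rw [dif_neg h2, dif_neg h2, hagree (j.val - 2*d) (by omega), relu_of_nonneg (ha _)]

lemma apply_pushL {rs rt : ℕ} (hs : 2*d + rs < m) (ht : 2*d + rt < m) (hne : rs ≠ rt)
    (c G : ℝ) (x : Fin d → ℝ) (a : ℕ → ℝ) (ha : ∀ ρ, 0 ≤ a ρ)
    (harg : 0 ≤ a rt + c * a rs + |c| * G * (1 + Vx x)) :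
    applyL (pushL d m rs rt hs ht c G) (enc d m x a)
      = enc d m x (Function.update (Function.update a rs 0) rt
          (a rt + c * a rs + |c| * G * (1 + Vx x))) := by
  have hdm : 2*d ≤ m := by omega
  funext j
  simp only [applyL, Layer.affine, pushL, Matrix.of_apply]
  by_cases hjt : j = ch d m rt ht
  · subst hjt
    simp only [eq_self_iff_true, if_true]
    rw [dot_add, dot_add]
    simp only [dot_smul, dot_e]
    rw [sum_pat_one_enc hdm, enc_ch, enc_ch]
    have heq : a rt + c * a rs + |c| * G * Vx x + |c| * G
        = a rt + c * a rs + |c| * G * (1 + Vx x) := by ring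
    rw [heq, relu_of_nonneg harg, enc_ch, Function.update_self]
  · by_cases hjs : j = ch d m rs hs
    · subst hjs
      have hbne : ch d m rs hs ≠ ch d m rt ht := ch_ne rs rt hs ht hne
      simp only [if_neg hbne, eq_self_iff_true, if_true]
      simp only [zero_mul, Finset.sum_const_zero, zero_add]
      rw [enc_ch, Function.update_of_ne hne, Function.update_self]
      simp [relu]
    · simp only [if_neg hjt, if_neg hjs]
      rw [dot_e, add_zero]
      apply relu_enc_other ha
      intro ρ hρ
      have h1 : ρ ≠ rt := by
        intro h; apply hjt; subst h; exact Fin.ext hρ.symm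
      have h2 : ρ ≠ rs := by
        intro h; apply hjs; subst h; exact Fin.ext hρ.symm
      rw [Function.update_of_ne h1, Function.update_of_ne h2]

/-- The scratch layer: tgt := relu(∑ w·x + β); others unchanged. -/
def scratchL (d m rt : ℕ) (ht : 2*d + rt < m) (w : Fin d → ℝ) (β : ℝ) : Layer m m where
  W := Matrix.of fun i j =>
    if i = ch d m rt ht then patN d w (fun t => -w t) j.val
    else if j = i then 1 else 0
  b := fun i => if i = ch d m rt ht then β else 0

lemma apply_scratchL {rt : ℕ} (ht : 2*d + rt < m) (w : Fin d → ℝ) (β : ℝ)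
    (x : Fin d → ℝ) (a : ℕ → ℝ) (ha : ∀ ρ, 0 ≤ a ρ) :
    applyL (scratchL d m rt ht w β) (enc d m x a)
      = enc d m x (Function.update a rt (relu ((∑ t, w t * x t) + β))) := by
  have hdm : 2*d ≤ m := by omega
  funext j
  simp only [applyL, Layer.affine, scratchL, Matrix.of_apply]
  by_cases hjt : j = ch d m rt ht
  · subst hjt
    simp only [eq_self_iff_true, if_true]
    rw [sum_pat_w_enc hdm, enc_ch, Function.update_self]
  · simp only [if_neg hjt]
    rw [dot_e, add_zero]
    apply relu_enc_other ha
    intro ρ hρ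
    have h1 : ρ ≠ rt := by
      intro h; apply hjt; subst h; exact Fin.ext hρ.symm
    rw [Function.update_of_ne h1]

/-- The finish layer: tgt := relu(tgt - S*(1+V(x)) + β); others unchanged. -/
def finishL (d m rt : ℕ) (ht : 2*d + rt < m) (S β : ℝ) : Layer m m where
  W := Matrix.of fun i j =>
    if i = ch d m rt ht then
      (if j = ch d m rt ht then 1 else 0) - S * patN d (fun _ => 1) (fun _ => 1) j.val
    else if j = i then 1 else 0
  b := fun i => if i = ch d m rt ht then β - S else 0

lemma apply_finishL {rt : ℕ} (ht : 2*d + rt < m) (S β : ℝ)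
    (x : Fin d → ℝ) (a : ℕ → ℝ) (ha : ∀ ρ, 0 ≤ a ρ) :
    applyL (finishL d m rt ht S β) (enc d m x a)
      = enc d m x (Function.update a rt (relu (a rt - S * (1 + Vx x) + β))) := by
  have hdm : 2*d ≤ m := by omega
  funext j
  simp only [applyL, Layer.affine, finishL, Matrix.of_apply]
  by_cases hjt : j = ch d m rt ht
  · subst hjt
    simp only [eq_self_iff_true, if_true]
    rw [dot_sub]
    simp only [dot_smul, dot_e]
    rw [sum_pat_one_enc hdm, enc_ch, enc_ch, Function.update_self]
    have heq : a rt - S * Vx x + (β - S) = a rt - S * (1 + Vx x) + β := by ring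
    rw [heq]
  · simp only [if_neg hjt]
    rw [dot_e, add_zero]
    apply relu_enc_other ha
    intro ρ hρ
    have h1 : ρ ≠ rt := by
      intro h; apply hjt; subst h; exact Fin.ext hρ.symm
    rw [Function.update_of_ne h1]

/-- The input layer: builds the encoded state from the raw input. -/
def inLayer (d m : ℕ) : Layer d m where
  W := Matrix.of fun i j =>
    if (i : ℕ) = (j : ℕ) then 1 else if (i : ℕ) = d + (j : ℕ) then -1 else 0
  b := fun _ => 0

lemma apply_inLayer (hdm : 2*d ≤ m) (x : Fin d → ℝ) :
    (fun i => relu ((inLayer d m).affine x i)) = enc d m x (fun _ => 0) := by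
  funext i
  simp only [Layer.affine, inLayer, Matrix.of_apply, add_zero]
  show relu _ = encN d x (fun _ => 0) i.val
  unfold encN
  by_cases h1 : (i : ℕ) < d
  · rw [dif_pos h1]
    have hsum : ∑ j : Fin d, (if (i : ℕ) = (j : ℕ) then (1:ℝ)
        else if (i : ℕ) = d + (j : ℕ) then -1 else 0) * x j = x ⟨i, h1⟩ := by
      rw [Finset.sum_eq_single (⟨(i : ℕ), h1⟩ : Fin d)]
      · simp
      · intro b _ hb
        have : ¬ ((i : ℕ) = (b : ℕ)) := by
          intro h; apply hb; exact Fin.ext h.symm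
        rw [if_neg this, if_neg (by omega), zero_mul]
      · intro h; exact absurd (Finset.mem_univ _) h
    rw [hsum]
  · rw [dif_neg h1]
    by_cases h2 : (i : ℕ) - d < d
    · rw [dif_pos h2]
      have hsum : ∑ j : Fin d, (if (i : ℕ) = (j : ℕ) then (1:ℝ)
          else if (i : ℕ) = d + (j : ℕ) then -1 else 0) * x j = -x ⟨(i : ℕ) - d, h2⟩ := by
        rw [Finset.sum_eq_single (⟨(i : ℕ) - d, h2⟩ : Fin d)]
        · rw [if_neg (by simp; omega), if_pos (by simp; omega)]
          ring
        · intro b _ hb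
          have hb1 : ¬ ((i : ℕ) = (b : ℕ)) := by omega
          have hb2 : ¬ ((i : ℕ) = d + (b : ℕ)) := by
            intro h; apply hb; apply Fin.ext; simp; omega
          rw [if_neg hb1, if_neg hb2, zero_mul]
        · intro h; exact absurd (Finset.mem_univ _) h
      rw [hsum]
    · rw [dif_neg h2]
      have hsum : ∑ j : Fin d, (if (i : ℕ) = (j : ℕ) then (1:ℝ)
          else if (i : ℕ) = d + (j : ℕ) then -1 else 0) * x j = 0 := by
        apply Finset.sum_eq_zero
        intro b _
        rw [if_neg (by omega), if_neg (by omega), zero_mul]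
      rw [hsum]
      simp [relu]

/-- The output layer: reads slot rt, removing the compensator. -/
def outLayer (d m rt : ℕ) (ht : 2*d + rt < m) (S β : ℝ) : Layer m 1 where
  W := Matrix.of fun _ j =>
    (if j = ch d m rt ht then 1 else 0) - S * patN d (fun _ => 1) (fun _ => 1) j.val
  b := fun _ => β - S

lemma affine_outLayer {rt : ℕ} (ht : 2*d + rt < m) (S β : ℝ) (x : Fin d → ℝ) (a : ℕ → ℝ)
    (i : Fin 1) :
    (outLayer d m rt ht S β).affine (enc d m x a) i = a rt - S * (1 + Vx x) + β := by
  have hdm : 2*d ≤ m := by omega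
  simp only [Layer.affine, outLayer, Matrix.of_apply]
  rw [dot_sub]
  simp only [dot_smul, dot_e]
  rw [sum_pat_one_enc hdm, enc_ch]
  ring

end Layers

section Fam

variable {d m : ℕ}

/-- A family of "adder" subroutines for the values `g x t` (the neurons of some layer
of the original network), each of which adds `c * g x t` (plus a compensator
`|c| * G * (1 + V x)`) into slot `r`, leaving the rest of the state unchanged.
Slots `< r` are assumed to be zero and are used as scratch space (restored to 0). -/
structure Fam (d m k r : ℕ) where
  g : (Fin d → ℝ) → Fin k → ℝ
  G : ℝ
  A : Fin k → ℝ → List (Layer m m)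
  T : ℕ
  hr : 2 * d + r < m
  hG : 0 ≤ G
  hg0 : ∀ x t, 0 ≤ g x t
  hgB : ∀ x t, g x t ≤ G * (1 + Vx x)
  hT : ∀ t c, (A t c).length ≤ T
  spec : ∀ t c x a, (∀ ρ, 0 ≤ a ρ) → (∀ ρ, ρ < r → a ρ = 0) →
    stRun (A t c) (enc d m x a)
      = enc d m x (Function.update a r (a r + (|c| * G * (1 + Vx x) + c * g x t)))

lemma inc_nonneg (F : Fam d m k r) (x : Fin d → ℝ) (t : Fin k) (c : ℝ) :
    0 ≤ |c| * F.G * (1 + Vx x) + c * F.g x t := by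
  have h1 : c * F.g x t ≥ -(|c| * F.g x t) := by
    rw [← neg_mul]
    exact mul_le_mul_of_nonneg_right (neg_abs_le c) (F.hg0 x t)
  have h2 : |c| * F.g x t ≤ |c| * (F.G * (1 + Vx x)) :=
    mul_le_mul_of_nonneg_left (F.hgB x t) (abs_nonneg c)
  nlinarith [abs_nonneg c]

lemma Vx_one_nonneg (x : Fin d → ℝ) : (0:ℝ) ≤ 1 + Vx x := by
  have := Vx_nonneg x; linarith

lemma comp_nonneg {G c gv : ℝ} {x : Fin d → ℝ} (hg0 : 0 ≤ gv) (hgB : gv ≤ G * (1 + Vx x)) :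
    0 ≤ |c| * G * (1 + Vx x) + c * gv := by
  have h1 : -(|c| * gv) ≤ c * gv := by
    rw [← neg_mul]
    exact mul_le_mul_of_nonneg_right (neg_abs_le c) hg0
  have h2 : |c| * gv ≤ |c| * (G * (1 + Vx x)) :=
    mul_le_mul_of_nonneg_left hgB (abs_nonneg c)
  nlinarith [abs_nonneg c]

lemma update_zero_self {a : ℕ → ℝ} {r : ℕ} (h : a r = 0) : Function.update a r 0 = a := by
  rw [← h]; exact Function.update_eq_self r a

lemma layer_bound {k : ℕ} (l : Layer d k) (x : Fin d → ℝ) (t : Fin k) :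
    relu (l.affine x t) ≤ ((∑ t, ∑ u, |l.W t u|) + ∑ t, |l.b t|) * (1 + Vx x) := by
  have hWG : (∑ u, |l.W t u|) ≤ (∑ t, ∑ u, |l.W t u|) + ∑ t, |l.b t| := by
    have h1 : (∑ u, |l.W t u|) ≤ ∑ t, ∑ u, |l.W t u| :=
      Finset.single_le_sum (f := fun t => ∑ u, |l.W t u|)
        (fun _ _ => Finset.sum_nonneg fun _ _ => abs_nonneg _) (Finset.mem_univ t)
    have h2 : (0:ℝ) ≤ ∑ t, |l.b t| := Finset.sum_nonneg fun _ _ => abs_nonneg _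
    linarith
  have hbG : |l.b t| ≤ (∑ t, ∑ u, |l.W t u|) + ∑ t, |l.b t| := by
    have h1 : |l.b t| ≤ ∑ t, |l.b t| :=
      Finset.single_le_sum (f := fun t => |l.b t|) (fun _ _ => abs_nonneg _)
        (Finset.mem_univ t)
    have h2 : (0:ℝ) ≤ ∑ t, ∑ u, |l.W t u| :=
      Finset.sum_nonneg fun _ _ => Finset.sum_nonneg fun _ _ => abs_nonneg _
    linarith
  set G := (∑ t, ∑ u, |l.W t u|) + ∑ t, |l.b t| with hG
  have hV := Vx_nonneg x
  calc relu (l.affine x t) ≤ |l.affine x t| := relu_le_abs _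
    _ = |(∑ u, l.W t u * x u) + l.b t| := rfl
    _ ≤ |∑ u, l.W t u * x u| + |l.b t| := abs_add_le _ _
    _ ≤ (∑ u, |l.W t u * x u|) + |l.b t| := by
        gcongr
        exact Finset.abs_sum_le_sum_abs _ _
    _ ≤ (∑ u, |l.W t u| * Vx x) + |l.b t| := by
        gcongr with u
        rw [abs_mul]
        exact mul_le_mul_of_nonneg_left (abs_le_Vx x u) (abs_nonneg _)
    _ = (∑ u, |l.W t u|) * Vx x + |l.b t| := by rw [Finset.sum_mul]
    _ ≤ G * Vx x + G := by gcongr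
    _ = G * (1 + Vx x) := by ring

/-- The base family: level-1 neurons, computed directly from the x-channels
into the scratch channel (slot 0), then pushed into slot 1. -/
def baseFam (l : Layer d k) (h1 : 2 * d + 1 < m) : Fam d m k 1 where
  g := fun x t => relu (l.affine x t)
  G := (∑ t, ∑ u, |l.W t u|) + ∑ t, |l.b t|
  A := fun t c => [scratchL d m 0 (by omega) (fun u => l.W t u) (l.b t),
    pushL d m 0 1 (by omega) h1 c ((∑ t, ∑ u, |l.W t u|) + ∑ t, |l.b t|)]
  T := 2
  hr := h1
  hG := by positivity
  hg0 := fun x t => relu_nonneg _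
  hgB := fun x t => layer_bound l x t
  hT := fun t c => by simp
  spec := by
    intro t c x a ha hz
    have ha0 : a 0 = 0 := hz 0 (by omega)
    set G := (∑ t, ∑ u, |l.W t u|) + ∑ t, |l.b t| with hGdef
    have hGnn : (0:ℝ) ≤ G := by rw [hGdef]; positivity
    show stRun _ _ = _
    have hrun : stRun [scratchL d m 0 (by omega : 2*d+0 < m) (fun u => l.W t u) (l.b t),
        pushL d m 0 1 (by omega : 2*d+0 < m) h1 c G] (enc d m x a)
        = applyL (pushL d m 0 1 (by omega) h1 c G)
            (applyL (scratchL d m 0 (by omega) (fun u => l.W t u) (l.b t)) (enc d m x a)) := rfl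
    rw [hrun, apply_scratchL]
    · set gv := relu ((∑ u, l.W t u * x u) + l.b t) with hgv
      have hgv0 : 0 ≤ gv := relu_nonneg _
      set a1 := Function.update a 0 gv with ha1
      have ha1nn : ∀ ρ, 0 ≤ a1 ρ := by
        intro ρ
        rcases eq_or_ne ρ 0 with h | h
        · rw [ha1, h, Function.update_self]; exact hgv0
        · rw [ha1, Function.update_of_ne h]; exact ha ρ
      have hb : gv ≤ G * (1 + Vx x) := layer_bound l x t
      rw [apply_pushL (by omega) h1 (by omega) c G x a1 ha1nn]
      · have e1 : a1 1 = a 1 := Function.update_of_ne (by omega) _ _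
        have e0 : a1 0 = gv := Function.update_self _ _ _
        rw [e1, e0, ha1, Function.update_idem, update_zero_self ha0]
        have hvals : a 1 + c * gv + |c| * G * (1 + Vx x)
            = a 1 + (|c| * G * (1 + Vx x) + c * relu (l.affine x t)) := by
          have hgg : relu (l.affine x t) = gv := rfl
          rw [hgg]; ring
        rw [hvals]
      · have e1 : a1 1 = a 1 := Function.update_of_ne (by omega) _ _
        have e0 : a1 0 = gv := Function.update_self _ _ _
        rw [e1, e0]
        have := comp_nonneg (c := c) hgv0 hb
        have := ha 1
        linarith
    · exact ha

/-- Running a sequence of adders accumulates the compensated sum into slot r. -/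
lemma fold_spec {k r : ℕ} (F : Fam d m k r) (w : Fin k → ℝ) (x : Fin d → ℝ) :
    ∀ (ts : List (Fin k)) (a : ℕ → ℝ), (∀ ρ, 0 ≤ a ρ) → (∀ ρ, ρ < r → a ρ = 0) →
    stRun ((ts.map (fun t => F.A t (w t))).flatten) (enc d m x a)
      = enc d m x (Function.update a r
          (a r + (ts.map (fun t => |w t| * F.G * (1 + Vx x) + w t * F.g x t)).sum)) := by
  intro ts
  induction ts with
  | nil =>
    intro a ha hz
    simp only [List.map_nil, List.flatten_nil, List.sum_nil, add_zero]
    rw [Function.update_eq_self]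
    rfl
  | cons t ts ih =>
    intro a ha hz
    simp only [List.map_cons, List.flatten_cons, List.sum_cons]
    rw [stRun_append, F.spec t (w t) x a ha hz]
    set v := |w t| * F.G * (1 + Vx x) + w t * F.g x t with hv
    have hv0 : 0 ≤ v := comp_nonneg (F.hg0 x t) (F.hgB x t)
    set a1 := Function.update a r (a r + v) with ha1
    have ha1nn : ∀ ρ, 0 ≤ a1 ρ := by
      intro ρ
      rcases eq_or_ne ρ r with h | h
      · rw [ha1, h, Function.update_self]; have := ha r; linarith
      · rw [ha1, Function.update_of_ne h]; exact ha ρ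
    have hz1 : ∀ ρ, ρ < r → a1 ρ = 0 := by
      intro ρ hρ
      rw [ha1, Function.update_of_ne (by omega)]
      exact hz ρ hρ
    rw [ih a1 ha1nn hz1]
    rw [ha1, Function.update_idem, Function.update_self, add_assoc]

lemma step_bound {k k' r : ℕ} (F : Fam d m k r) (l : Layer k k') (x : Fin d → ℝ) (j : Fin k') :
    relu (l.affine (F.g x) j)
      ≤ ((∑ j, ∑ t, |l.W j t|) * F.G + ∑ j, |l.b j|) * (1 + Vx x) := by
  have hV := Vx_nonneg x
  have hG := F.hG
  have hWG : (∑ t, |l.W j t|) ≤ ∑ j, ∑ t, |l.W j t| :=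
    Finset.single_le_sum (f := fun j => ∑ t, |l.W j t|)
      (fun _ _ => Finset.sum_nonneg fun _ _ => abs_nonneg _) (Finset.mem_univ j)
  have hbG : |l.b j| ≤ ∑ j, |l.b j| :=
    Finset.single_le_sum (f := fun j => |l.b j|) (fun _ _ => abs_nonneg _)
      (Finset.mem_univ j)
  calc relu (l.affine (F.g x) j) ≤ |l.affine (F.g x) j| := relu_le_abs _
    _ = |(∑ t, l.W j t * F.g x t) + l.b j| := rfl
    _ ≤ |∑ t, l.W j t * F.g x t| + |l.b j| := abs_add_le _ _
    _ ≤ (∑ t, |l.W j t * F.g x t|) + |l.b j| := by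
        gcongr
        exact Finset.abs_sum_le_sum_abs _ _
    _ ≤ (∑ t, |l.W j t| * (F.G * (1 + Vx x))) + |l.b j| := by
        gcongr with t
        rw [abs_mul, abs_of_nonneg (F.hg0 x t)]
        exact mul_le_mul_of_nonneg_left (F.hgB x t) (abs_nonneg _)
    _ = (∑ t, |l.W j t|) * (F.G * (1 + Vx x)) + |l.b j| := by rw [← Finset.sum_mul]
    _ ≤ (∑ j, ∑ t, |l.W j t|) * (F.G * (1 + Vx x)) + (∑ j, |l.b j|) * (1 + Vx x) := by
        have hbsum : (0:ℝ) ≤ ∑ j, |l.b j| := Finset.sum_nonneg fun _ _ => abs_nonneg _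
        have hb1 : |l.b j| ≤ (∑ j, |l.b j|) * (1 + Vx x) := by
          have h2 : (∑ j, |l.b j|) * 1 ≤ (∑ j, |l.b j|) * (1 + Vx x) :=
            mul_le_mul_of_nonneg_left (by linarith) hbsum
          linarith
        have hw1 : (∑ t, |l.W j t|) * (F.G * (1 + Vx x))
            ≤ (∑ j, ∑ t, |l.W j t|) * (F.G * (1 + Vx x)) :=
          mul_le_mul_of_nonneg_right hWG (mul_nonneg hG (by linarith))
        linarith
    _ = ((∑ j, ∑ t, |l.W j t|) * F.G + ∑ j, |l.b j|) * (1 + Vx x) := by ring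

/-- The step: from adders for the neurons of one layer, build adders for the next. -/
def stepFam {k k' r : ℕ} (F : Fam d m k r) (l : Layer k k') (hr' : 2 * d + (r + 1) < m) :
    Fam d m k' (r + 1) where
  g := fun x j => relu (l.affine (F.g x) j)
  G := (∑ j, ∑ t, |l.W j t|) * F.G + ∑ j, |l.b j|
  A := fun j c =>
    ((List.finRange k).map (fun t => F.A t (l.W j t))).flatten
      ++ [finishL d m r F.hr ((∑ t, |l.W j t|) * F.G) (l.b j),
          pushL d m r (r+1) F.hr hr' c ((∑ j, ∑ t, |l.W j t|) * F.G + ∑ j, |l.b j|)]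
  T := k * F.T + 2
  hr := hr'
  hG := by
    have := F.hG
    have h1 : (0:ℝ) ≤ ∑ j, ∑ t, |l.W j t| :=
      Finset.sum_nonneg fun _ _ => Finset.sum_nonneg fun _ _ => abs_nonneg _
    have h2 : (0:ℝ) ≤ ∑ j, |l.b j| := Finset.sum_nonneg fun _ _ => abs_nonneg _
    positivity
  hg0 := fun x j => relu_nonneg _
  hgB := fun x j => step_bound F l x j
  hT := by
    intro j c
    rw [List.length_append]
    have h1 : (((List.finRange k).map (fun t => F.A t (l.W j t))).flatten).length ≤ k * F.T := by
      rw [List.length_flatten, List.map_map]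
      have h2 : ∀ y ∈ (List.finRange k).map (List.length ∘ fun t => F.A t (l.W j t)), y ≤ F.T := by
        intro y hy
        rw [List.mem_map] at hy
        obtain ⟨t, _, rfl⟩ := hy
        exact F.hT t _
      calc ((List.finRange k).map (List.length ∘ fun t => F.A t (l.W j t))).sum
          ≤ ((List.finRange k).map (List.length ∘ fun t => F.A t (l.W j t))).length * F.T := by
            have := List.sum_le_card_nsmul _ F.T h2
            simpa [smul_eq_mul] using this
        _ = k * F.T := by rw [List.length_map, List.length_finRange]
    simpa using Nat.add_le_add h1 (le_refl 2)
  spec := by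
    intro j c x a ha hz
    set S := (∑ t, |l.W j t|) * F.G with hS
    set G' := (∑ j, ∑ t, |l.W j t|) * F.G + ∑ j, |l.b j| with hG'
    have har : a r = 0 := hz r (by omega)
    show stRun (_ ++ _) _ = _
    rw [stRun_append]
    rw [fold_spec F (fun t => l.W j t) x (List.finRange k) a ha (fun ρ hρ => hz ρ (by omega))]
    have hsum : ((List.finRange k).map
        (fun t => |l.W j t| * F.G * (1 + Vx x) + l.W j t * F.g x t)).sum
        = S * (1 + Vx x) + ∑ t, l.W j t * F.g x t := by
      rw [← Fin.sum_univ_def (fun t => |l.W j t| * F.G * (1 + Vx x) + l.W j t * F.g x t)]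
      rw [Finset.sum_add_distrib, hS]
      congr 1
      rw [Finset.sum_mul, Finset.sum_mul]
    rw [hsum]
    set a1 := Function.update a r (a r + (S * (1 + Vx x) + ∑ t, l.W j t * F.g x t)) with ha1
    have hsum_nn : 0 ≤ S * (1 + Vx x) + ∑ t, l.W j t * F.g x t := by
      have heq : S * (1 + Vx x) + ∑ t, l.W j t * F.g x t
          = ∑ t, (|l.W j t| * F.G * (1 + Vx x) + l.W j t * F.g x t) := by
        rw [Finset.sum_add_distrib, hS]
        congr 1
        rw [Finset.sum_mul, Finset.sum_mul]
      rw [heq]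
      exact Finset.sum_nonneg fun t _ => comp_nonneg (F.hg0 x t) (F.hgB x t)
    have ha1nn : ∀ ρ, 0 ≤ a1 ρ := by
      intro ρ
      rcases eq_or_ne ρ r with h | h
      · rw [ha1, h, Function.update_self, har]
        linarith
      · rw [ha1, Function.update_of_ne h]; exact ha ρ
    have hrun2 : stRun [finishL d m r F.hr S (l.b j), pushL d m r (r+1) F.hr hr' c G']
        (enc d m x a1)
        = applyL (pushL d m r (r+1) F.hr hr' c G')
            (applyL (finishL d m r F.hr S (l.b j)) (enc d m x a1)) := rfl
    rw [hrun2, apply_finishL F.hr S (l.b j) x a1 ha1nn]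
    have hval2 : a1 r - S * (1 + Vx x) + l.b j = (∑ t, l.W j t * F.g x t) + l.b j := by
      rw [ha1, Function.update_self, har]
      ring
    set gj := relu (l.affine (F.g x) j) with hgj
    have hval3 : relu (a1 r - S * (1 + Vx x) + l.b j) = gj := by rw [hval2]; rfl
    rw [hval3]
    set a2 := Function.update a1 r gj with ha2
    have ha2nn : ∀ ρ, 0 ≤ a2 ρ := by
      intro ρ
      rcases eq_or_ne ρ r with h | h
      · rw [ha2, h, Function.update_self]; exact relu_nonneg _
      · rw [ha2, Function.update_of_ne h]; exact ha1nn ρ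
    have hgjB : gj ≤ G' * (1 + Vx x) := step_bound F l x j
    have e1 : a2 (r+1) = a (r+1) := by
      rw [ha2, Function.update_of_ne (by omega), ha1, Function.update_of_ne (by omega)]
    have e0 : a2 r = gj := by rw [ha2, Function.update_self]
    rw [apply_pushL F.hr hr' (by omega) c G' x a2 ha2nn]
    · rw [e1, e0, ha2, Function.update_idem, ha1, Function.update_idem, update_zero_self har]
      have hfin : a (r+1) + c * gj + |c| * G' * (1 + Vx x)
          = a (r+1) + (|c| * G' * (1 + Vx x) + c * gj) := by ring
      rw [hfin]
    · rw [e1, e0]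
      have hc := comp_nonneg (c := c) (relu_nonneg (l.affine (F.g x) j)) hgjB
      have := ha (r+1)
      rw [← hgj] at hc
      linarith

end Fam

section Build

variable {d n m : ℕ}

lemma net_depth_pos {a b : ℕ} (N : Net a b) : 1 ≤ N.depth := by
  cases N <;> simp [Net.depth]

lemma nin_le_width {a b : ℕ} (N : Net a b) : a ≤ N.width := by
  cases N <;> simp [Net.width]

def listToNet {m : ℕ} : List (Layer m m) → Layer m 1 → Net m 1
  | [], lst => .last lst
  | (l :: P), lst => .cons l (listToNet P lst)

lemma listToNet_eval {m : ℕ} (P : List (Layer m m)) (lst : Layer m 1) (s : Fin m → ℝ) :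
    (listToNet P lst).eval s = lst.affine (stRun P s) := by
  induction P generalizing s with
  | nil => rfl
  | cons l P ih =>
    show (listToNet P lst).eval (fun i => relu (l.affine s i)) = _
    rw [ih]
    rfl

lemma listToNet_depth {m : ℕ} (P : List (Layer m m)) (lst : Layer m 1) :
    (listToNet P lst).depth = P.length + 1 := by
  induction P with
  | nil => rfl
  | cons l P ih => show (listToNet P lst).depth + 1 = _; rw [ih]; simp

lemma listToNet_width {m : ℕ} (P : List (Layer m m)) (lst : Layer m 1) :
    (listToNet P lst).width = m := by
  induction P with
  | nil => rfl
  | cons l P ih => show max m (listToNet P lst).width = m; rw [ih]; simp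

/-- Main construction: given an adder family for the inputs of a (suffix) network N,
produce a program and an output layer computing N's output. -/
lemma build (hn : 0 < n) :
    ∀ (Dep : ℕ) {k : ℕ} (N : Net k 1) (r : ℕ) (F : Fam d m k r),
    N.depth = Dep → 2 * d + r + Dep = m → N.width ≤ n →
    ∃ (P : List (Layer m m)) (lst : Layer m 1),
      P.length ≤ n ^ Dep * F.T + 2 * (Dep - 1) * n ^ (Dep - 1) ∧
      ∀ x : Fin d → ℝ,
        lst.affine (stRun P (enc d m x (fun _ => 0))) 0 = N.eval (F.g x) 0 := by
  intro Dep
  induction Dep with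
  | zero =>
    intro k N r F hdep _ _
    exact absurd hdep (by have := net_depth_pos N; omega)
  | succ D ihD =>
    intro k N r F hdep hm hw
    cases N with
    | last l =>
      have hD0 : D = 0 := by
        have : (Net.last l).depth = 1 := rfl
        omega
      subst hD0
      refine ⟨((List.finRange k).map (fun t => F.A t (l.W 0 t))).flatten,
        outLayer d m r F.hr ((∑ t, |l.W 0 t|) * F.G) (l.b 0), ?_, ?_⟩
      · have hkn : k ≤ n := hw
        have h1 : (((List.finRange k).map (fun t => F.A t (l.W 0 t))).flatten).length
            ≤ k * F.T := by
          rw [List.length_flatten, List.map_map]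
          have h2 : ∀ y ∈ (List.finRange k).map (List.length ∘ fun t => F.A t (l.W 0 t)),
              y ≤ F.T := by
            intro y hy
            rw [List.mem_map] at hy
            obtain ⟨t, _, rfl⟩ := hy
            exact F.hT t _
          calc ((List.finRange k).map (List.length ∘ fun t => F.A t (l.W 0 t))).sum
              ≤ ((List.finRange k).map (List.length ∘ fun t => F.A t (l.W 0 t))).length
                  * F.T := by
                have := List.sum_le_card_nsmul _ F.T h2
                simpa [smul_eq_mul] using this
            _ = k * F.T := by rw [List.length_map, List.length_finRange]
        calc (((List.finRange k).map (fun t => F.A t (l.W 0 t))).flatten).length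
            ≤ k * F.T := h1
          _ ≤ n ^ 1 * F.T := by
              simpa using Nat.mul_le_mul_right F.T hkn
          _ ≤ n ^ 1 * F.T + 2 * (1 - 1) * n ^ (1 - 1) := Nat.le_add_right _ _
      · intro x
        have hz : ∀ ρ : ℕ, ρ < r → (fun _ : ℕ => (0:ℝ)) ρ = 0 := fun _ _ => rfl
        have ha : ∀ ρ : ℕ, (0:ℝ) ≤ (fun _ : ℕ => (0:ℝ)) ρ := fun _ => le_refl 0
        rw [fold_spec F (fun t => l.W 0 t) x (List.finRange k) _ ha hz]
        have hsum : ((List.finRange k).map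
            (fun t => |l.W 0 t| * F.G * (1 + Vx x) + l.W 0 t * F.g x t)).sum
            = ((∑ t, |l.W 0 t|) * F.G) * (1 + Vx x) + ∑ t, l.W 0 t * F.g x t := by
          rw [← Fin.sum_univ_def
            (fun t => |l.W 0 t| * F.G * (1 + Vx x) + l.W 0 t * F.g x t)]
          rw [Finset.sum_add_distrib]
          congr 1
          rw [Finset.sum_mul, Finset.sum_mul]
        rw [hsum, affine_outLayer F.hr]
        rw [Function.update_self]
        show _ = (∑ t, l.W 0 t * F.g x t) + l.b 0
        ring
    | cons l rest =>
      rename_i k2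
      have hrd : rest.depth = D := by
        have : (Net.cons l rest).depth = rest.depth + 1 := rfl
        omega
      have hD1 : 1 ≤ D := by have := net_depth_pos rest; omega
      have hr' : 2 * d + (r + 1) < m := by omega
      have hw0 : max k rest.width ≤ n := hw
      have hw' : rest.width ≤ n := le_trans (le_max_right _ _) hw0
      have hm' : 2 * d + (r + 1) + D = m := by omega
      obtain ⟨P, lst, hlen, heval⟩ := ihD rest (r+1) (stepFam F l hr') hrd hm' hw'
      refine ⟨P, lst, ?_, ?_⟩
      · have hkn : k ≤ n := le_trans (nin_le_width (Net.cons l rest)) hw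
        have hT' : (stepFam F l hr').T = k * F.T + 2 := rfl
        rw [hT'] at hlen
        have h2 : n ^ D * (k * F.T + 2) ≤ n ^ D * (n * F.T + 2) :=
          Nat.mul_le_mul_left _ (Nat.add_le_add_right (Nat.mul_le_mul_right _ hkn) 2)
        have h4 : 2 * (D - 1) * n ^ (D - 1) ≤ 2 * (D - 1) * n ^ D :=
          Nat.mul_le_mul_left _ (Nat.pow_le_pow_right hn (by omega))
        have h5 : n ^ (D+1) * F.T + 2 * n ^ D + 2 * (D - 1) * n ^ D
            ≤ n ^ (D+1) * F.T + 2 * ((D+1) - 1) * n ^ ((D+1) - 1) := by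
          have e1 : (D+1) - 1 = D := by omega
          have e3 : 2 + 2 * (D - 1) = 2 * D := by omega
          have e4 : n ^ (D+1) * F.T + 2 * n ^ D + 2 * (D - 1) * n ^ D
              = n ^ (D+1) * F.T + (2 + 2 * (D - 1)) * n ^ D := by ring
          rw [e1, e4, e3]
        calc P.length ≤ n ^ D * (k * F.T + 2) + 2 * (D - 1) * n ^ (D - 1) := hlen
          _ ≤ n ^ D * (n * F.T + 2) + 2 * (D - 1) * n ^ D := Nat.add_le_add h2 h4
          _ = n ^ (D+1) * F.T + 2 * n ^ D + 2 * (D - 1) * n ^ D := by ring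
          _ ≤ n ^ (D+1) * F.T + 2 * ((D+1) - 1) * n ^ ((D+1) - 1) := h5
      · intro x
        rw [heval x]
        rfl

lemma two_add_two_mul_le (E : ℕ) : 2 + 2 * E ≤ 2 ^ (E + 1) := by
  induction E with
  | zero => norm_num
  | succ e ih =>
    have h2 : (2:ℕ) ≤ 2 ^ (e+1) := by
      calc (2:ℕ) = 2 ^ 1 := by norm_num
        _ ≤ 2 ^ (e+1) := Nat.pow_le_pow_right (by norm_num) (by omega)
    calc 2 + 2 * (e+1) = (2 + 2*e) + 2 := by ring
      _ ≤ 2 ^ (e+1) + 2 := Nat.add_le_add_right ih 2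
      _ ≤ 2 ^ (e+1) + 2 ^ (e+1) := Nat.add_le_add_left h2 _
      _ = 2 ^ (e+2) := by ring

end Build

end NSim

theorem stmt3 (d n L : ℕ) (hn : 0 < n) (hL : 2 ≤ L)
    (Nstar : Net d 1) (hwidth : Nstar.width ≤ n) (hdepth : Nstar.depth = L) :
    ∃ N : Net d 1,
      N.width ≤ 2 * (d + L - 1) ∧
      N.depth ≤ (2 * n)^(L - 1) + 2 ∧
      ∀ x : Fin d → ℝ, N.eval x 0 = Nstar.eval x 0 := by
  cases Nstar with
  | last l =>
    exfalso
    have : (Net.last l).depth = 1 := rfl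
    omega
  | cons l rest =>
    rename_i k2
    have hdL : (Net.cons l rest).depth = rest.depth + 1 := rfl
    have hrd : rest.depth = L - 1 := by omega
    have h1 : 2 * d + 1 < 2 * d + L := by omega
    have hw0 : max d rest.width ≤ n := hwidth
    have hw' : rest.width ≤ n := le_trans (le_max_right _ _) hw0
    obtain ⟨P, lst, hlen, heval⟩ := build (d := d) (m := 2*d+L) hn (L-1) rest 1
      (baseFam l h1) hrd (by omega) hw'
    refine ⟨Net.cons (inLayer d (2*d+L)) (listToNet P lst), ?_, ?_, ?_⟩
    · show max d (listToNet P lst).width ≤ 2 * (d + L - 1)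
      rw [listToNet_width]
      have : d ≤ 2 * (d + L - 1) := by omega
      have : 2*d+L ≤ 2 * (d + L - 1) := by omega
      exact max_le (by omega) (by omega)
    · show (listToNet P lst).depth + 1 ≤ (2 * n)^(L - 1) + 2
      rw [listToNet_depth]
      have hT2 : (baseFam (m := 2*d+L) l h1).T = 2 := rfl
      rw [hT2] at hlen
      set E := L - 2 with hE
      have hL1 : L - 1 = E + 1 := by omega
      rw [hL1] at hlen
      simp only [Nat.add_sub_cancel] at hlen
      have key : n ^ (E+1) * 2 + 2 * E * n ^ E ≤ (2*n) ^ (E+1) := by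
        have s1 : 2 * E * n ^ E ≤ 2 * E * n ^ (E+1) :=
          Nat.mul_le_mul_left _ (Nat.pow_le_pow_right hn (by omega))
        calc n ^ (E+1) * 2 + 2 * E * n ^ E
            ≤ n ^ (E+1) * 2 + 2 * E * n ^ (E+1) := Nat.add_le_add_left s1 _
          _ = (2 + 2 * E) * n ^ (E+1) := by ring
          _ ≤ 2 ^ (E+1) * n ^ (E+1) := Nat.mul_le_mul_right _ (two_add_two_mul_le E)
          _ = (2*n) ^ (E+1) := (mul_pow 2 n (E+1)).symm
      rw [hL1]
      omega
    · intro x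
      show (listToNet P lst).eval (fun i => relu ((inLayer d (2*d+L)).affine x i)) 0 = _
      rw [apply_inLayer (by omega : 2*d ≤ 2*d+L) x, listToNet_eval, heval x]
      rfl
end

section
/- Let f* : ℝ^d → ℝ be a ReLU network of depth 2 and width at most n, i.e. f*(x) = Σ_{i=1}^{n} u_i* σ(⟨w_i*, x⟩ + b_i*) + b* for weights u_i*, b_i*, b* ∈ ℝ, w_i* ∈ ℝ^d. Then there exists a ReLU network f : ℝ^d → ℝ of depth n + 2 and width at most 2d + 2 such that f(x) = f*(x) for every x ∈ ℝ^d. -/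
open scoped BigOperators

namespace S4

lemma relu_nonneg (x : ℝ) : 0 ≤ relu x := le_max_left _ _
lemma relu_of_nonneg {x : ℝ} (h : 0 ≤ x) : relu x = x := max_eq_right h
lemma relu_relu (x : ℝ) : relu (relu x) = relu x := relu_of_nonneg (relu_nonneg x)
lemma relu_zero : relu 0 = (0:ℝ) := max_self 0
lemma relu_mul {a : ℝ} (ha : 0 ≤ a) (x : ℝ) : relu (a * x) = a * relu x := by
  rcases le_total x 0 with h | h
  · have h1 : a * x ≤ 0 := mul_nonpos_of_nonneg_of_nonpos ha h
    simp [relu, max_eq_left h1, max_eq_left h]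
  · have h1 : 0 ≤ a * x := mul_nonneg ha h
    simp [relu, max_eq_right h1, max_eq_right h]
lemma relu_sub_relu_neg (x : ℝ) : relu x - relu (-x) = x := by
  rcases le_total x 0 with h | h
  · simp [relu, max_eq_left h, max_eq_right (neg_nonneg.mpr h)]
  · simp [relu, max_eq_right h, max_eq_left (neg_nonpos.mpr h)]
lemma relu_add_relu_neg (x : ℝ) : relu x + relu (-x) = |x| := by
  rcases le_total x 0 with h | h
  · simp [relu, max_eq_left h, max_eq_right (neg_nonneg.mpr h), abs_of_nonpos h]
  · simp [relu, max_eq_right h, max_eq_left (neg_nonpos.mpr h), abs_of_nonneg h]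
lemma relu_le_abs (x : ℝ) : relu x ≤ |x| := max_le (abs_nonneg x) (le_abs_self x)

variable {d : ℕ}

def blk {α : Type*} (p q : Fin d → α) (t a : α) : Fin (d + d + 2) → α :=
  Fin.addCases (Fin.addCases p q) ![t, a]

def iP (j : Fin d) : Fin (d + d + 2) := Fin.castAdd 2 (Fin.castAdd d j)
def iQ (j : Fin d) : Fin (d + d + 2) := Fin.castAdd 2 (Fin.natAdd d j)
def iT : Fin (d + d + 2) := Fin.natAdd (d + d) 0
def iA : Fin (d + d + 2) := Fin.natAdd (d + d) 1

@[simp] lemma blk_iP {α : Type*} (p q : Fin d → α) (t a : α) (j : Fin d) :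
    blk p q t a (iP j) = p j := by
  rw [blk, iP, Fin.addCases_left, Fin.addCases_left]
@[simp] lemma blk_iQ {α : Type*} (p q : Fin d → α) (t a : α) (j : Fin d) :
    blk p q t a (iQ j) = q j := by
  rw [blk, iQ, Fin.addCases_left, Fin.addCases_right]
@[simp] lemma blk_iT {α : Type*} (p q : Fin d → α) (t a : α) :
    blk p q t a iT = t := by
  rw [blk, iT, Fin.addCases_right]; rfl
@[simp] lemma blk_iA {α : Type*} (p q : Fin d → α) (t a : α) :
    blk p q t a iA = a := by
  rw [blk, iA, Fin.addCases_right]; rfl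

lemma sum_blk (f : Fin (d + d + 2) → ℝ) :
    ∑ i, f i = (∑ j, f (iP j)) + (∑ j, f (iQ j)) + f iT + f iA := by
  rw [Fin.sum_univ_add (f := f), Fin.sum_univ_add (f := fun i => f (Fin.castAdd 2 i)),
    Fin.sum_univ_two]
  simp [iP, iQ, iT, iA]
  ring

lemma funext_blk {α : Type*} {f g : Fin (d + d + 2) → α}
    (h1 : ∀ j, f (iP j) = g (iP j)) (h2 : ∀ j, f (iQ j) = g (iQ j))
    (h3 : f iT = g iT) (h4 : f iA = g iA) : f = g := by
  funext i
  refine Fin.addCases (fun j => ?_) (fun j => ?_) i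
  · exact Fin.addCases (motive := fun j => f (Fin.castAdd 2 j) = g (Fin.castAdd 2 j)) h1 h2 j
  · fin_cases j
    · exact h3
    · exact h4

lemma dot_blk (rP rQ : Fin d → ℝ) (rT rA : ℝ) (p q : Fin d → ℝ) (t a : ℝ) :
    (∑ k, blk rP rQ rT rA k * blk p q t a k)
      = (∑ j, rP j * p j) + (∑ j, rQ j * q j) + rT * t + rA * a := by
  rw [sum_blk]; simp

section Construction

variable (d n : ℕ) (ε c : ℕ → ℝ) (wt : ℕ → Fin d → ℝ) (bt : ℕ → ℝ) (Cc bst : ℝ)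

/-- the inner affine form of neuron `i`. -/
def gg (i : ℕ) (x : Fin d → ℝ) : ℝ := (∑ j, wt i j * x j) + bt i

/-- output of the pipeline neuron for index `i`. -/
def TT (i : ℕ) (x : Fin d → ℝ) : ℝ := relu (c i * gg d wt bt i x)

/-- partial accumulated sum. -/
def AA (k : ℕ) (x : Fin d → ℝ) : ℝ := ∑ i ∈ Finset.range k, ε i * TT d c wt bt i x

/-- the positive shift. -/
def MM (x : Fin d → ℝ) : ℝ := Cc * (1 + ∑ j, (relu (x j) + relu (-(x j))))

/-- intended value of the accumulator slot before absorbing neuron `k`. -/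
def Acc (k : ℕ) (x : Fin d → ℝ) : ℝ :=
  if k = 0 then 0 else MM d Cc x + AA d ε c wt bt k x

def L1 : Layer d (d + d + 2) where
  W := Matrix.of (blk (fun j j' => if j' = j then 1 else 0)
                      (fun j j' => if j' = j then -1 else 0)
                      (fun j' => c 0 * wt 0 j')
                      (fun _ => 0))
  b := blk (fun _ => (0:ℝ)) (fun _ => 0) (c 0 * bt 0) 0

def hid (i : ℕ) : Layer (d + d + 2) (d + d + 2) where
  W := Matrix.of (blk
    (fun j => blk (fun j' => if j' = j then (1:ℝ) else 0) (fun _ => 0) 0 0)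
    (fun j => blk (fun _ => (0:ℝ)) (fun j' => if j' = j then 1 else 0) 0 0)
    (blk (fun j' => c (i+1) * wt (i+1) j') (fun j' => -(c (i+1) * wt (i+1) j')) 0 0)
    (blk (fun _ => if i = 0 then Cc else 0) (fun _ => if i = 0 then Cc else 0) (ε i) 1))
  b := blk (fun _ => (0:ℝ)) (fun _ => 0) (c (i+1) * bt (i+1)) (if i = 0 then Cc else 0)

def outL : Layer (d + d + 2) 1 where
  W := Matrix.of fun _ => blk (fun _ => -Cc) (fun _ => -Cc) 0 1
  b := fun _ => bst - Cc

def chain : ℕ → Net (d + d + 2) 1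
  | 0 => .last (outL d Cc bst)
  | r + 1 => .cons (hid d ε c wt bt Cc (n - (r+1))) (chain r)

def fullNet : Net d 1 := .cons (L1 d c wt bt) (chain d n ε c wt bt Cc bst n)

lemma chain_depth : ∀ r, (chain d n ε c wt bt Cc bst r).depth = r + 1
  | 0 => rfl
  | r + 1 => by rw [chain, Net.depth, chain_depth r]

lemma chain_width : ∀ r, (chain d n ε c wt bt Cc bst r).width = d + d + 2
  | 0 => rfl
  | r + 1 => by rw [chain, Net.width, chain_width r, max_self]

lemma affine_L1 (x : Fin d → ℝ) :
    (L1 d c wt bt).affine x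
      = blk (fun j => x j) (fun j => -(x j)) (c 0 * gg d wt bt 0 x) 0 := by
  apply funext_blk
  · intro j
    simp [Layer.affine, L1, blk_iP, ite_mul, Finset.sum_ite_eq']
  · intro j
    simp [Layer.affine, L1, blk_iQ, ite_mul, Finset.sum_ite_eq']
  · simp [Layer.affine, L1, blk_iT, gg, Finset.mul_sum, mul_add, mul_assoc]
  · simp [Layer.affine, L1, blk_iA]

lemma affine_hid (i : ℕ) (p q : Fin d → ℝ) (t a : ℝ) :
    (hid d ε c wt bt Cc i).affine (blk p q t a)
      = blk p q
          ((∑ j, c (i+1) * wt (i+1) j * p j) - (∑ j, c (i+1) * wt (i+1) j * q j)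
            + c (i+1) * bt (i+1))
          ((if i = 0 then Cc else 0) * ((∑ j, p j) + (∑ j, q j) + 1) + ε i * t + a) := by
  apply funext_blk
  · intro j
    simp only [Layer.affine, hid, Matrix.of_apply, blk_iP, dot_blk]
    simp [ite_mul, Finset.sum_ite_eq']
  · intro j
    simp only [Layer.affine, hid, Matrix.of_apply, blk_iQ, dot_blk]
    simp [ite_mul, Finset.sum_ite_eq']
  · simp only [Layer.affine, hid, Matrix.of_apply, blk_iT, dot_blk]
    simp only [neg_mul, Finset.sum_neg_distrib]
    ring
  · simp only [Layer.affine, hid, Matrix.of_apply, blk_iA, dot_blk]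
    simp only [← Finset.mul_sum]
    ring

lemma affine_outL (p q : Fin d → ℝ) (t a : ℝ) :
    (outL d Cc bst).affine (blk p q t a) 0
      = -Cc * (∑ j, p j) + -Cc * (∑ j, q j) + a + (bst - Cc) := by
  simp only [Layer.affine, outL, Matrix.of_apply, dot_blk, Finset.mul_sum]
  ring

lemma chain_eval (hn : 0 < n) (_hc : ∀ i, 0 ≤ c i)
    (hM : ∀ k, k ≤ n → ∀ x : Fin d → ℝ, 0 ≤ MM d Cc x + AA d ε c wt bt k x) :
    ∀ r, r ≤ n → ∀ x : Fin d → ℝ,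
      (chain d n ε c wt bt Cc bst r).eval
        (blk (fun j => relu (x j)) (fun j => relu (-(x j)))
          (TT d c wt bt (n - r) x) (Acc d ε c wt bt Cc (n - r) x)) 0
      = AA d ε c wt bt n x + bst := by
  intro r
  induction r with
  | zero =>
    intro _ x
    rw [chain]
    show (outL d Cc bst).affine _ 0 = _
    rw [affine_outL]
    have hn0 : n - 0 ≠ 0 := by omega
    rw [Acc, if_neg hn0]
    have hM' : MM d Cc x
        = Cc + Cc * (∑ j, relu (x j)) + Cc * (∑ j, relu (-(x j))) := by
      rw [MM, Finset.sum_add_distrib]; ring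
    rw [hM']
    simp only [Nat.sub_zero]
    ring
  | succ r ih =>
    intro hr x
    rw [chain]
    show (chain d n ε c wt bt Cc bst r).eval _ 0 = _
    set i := n - (r + 1) with hi
    have hir : i + 1 = n - r := by omega
    have hstep : (fun o => relu ((hid d ε c wt bt Cc i).affine
          (blk (fun j => relu (x j)) (fun j => relu (-(x j)))
            (TT d c wt bt i x) (Acc d ε c wt bt Cc i x)) o))
        = blk (fun j => relu (x j)) (fun j => relu (-(x j)))
            (TT d c wt bt (i+1) x) (Acc d ε c wt bt Cc (i+1) x) := by
      rw [affine_hid]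
      apply funext_blk
      · intro j; rw [blk_iP, blk_iP, relu_relu]
      · intro j; rw [blk_iQ, blk_iQ, relu_relu]
      · rw [blk_iT, blk_iT]
        have harg : (∑ j, c (i+1) * wt (i+1) j * relu (x j))
              - (∑ j, c (i+1) * wt (i+1) j * relu (-(x j)))
              + c (i+1) * bt (i+1)
            = c (i+1) * gg d wt bt (i+1) x := by
          rw [← Finset.sum_sub_distrib, gg, mul_add, Finset.mul_sum]
          congr 1
          apply Finset.sum_congr rfl
          intro j _
          rw [← mul_sub, relu_sub_relu_neg]
          ring
        rw [harg, TT]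
      · rw [blk_iA, blk_iA]
        have hsum : (if i = 0 then Cc else 0)
              * ((∑ j, relu (x j)) + (∑ j, relu (-(x j))) + 1)
              + ε i * TT d c wt bt i x + Acc d ε c wt bt Cc i x
            = MM d Cc x + AA d ε c wt bt (i+1) x := by
          rw [AA, Finset.sum_range_succ, ← AA]
          by_cases h0 : i = 0
          · rw [h0, if_pos rfl, Acc, if_pos rfl, AA, Finset.sum_range_zero, MM,
              Finset.sum_add_distrib]
            ring
          · rw [if_neg h0, Acc, if_neg h0]
            ring
        rw [hsum, relu_of_nonneg (hM (i+1) (by omega) x), Acc, if_neg (by omega)]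
    rw [hstep, hir]
    exact ih (by omega) x

end Construction

end S4

theorem stmt4 (d n : ℕ) (hd : 0 < d) (hn : 0 < n)
    (u bs : Fin n → ℝ) (w : Fin n → Fin d → ℝ) (bstar : ℝ) :
    ∃ f : Net d 1,
      f.depth = n + 2 ∧
      f.width ≤ 2 * d + 2 ∧
      ∀ x : Fin d → ℝ,
        f.eval x 0 = (∑ i : Fin n, u i * relu ((∑ j, w i j * x j) + bs i)) + bstar := by
  classical
  set c : ℕ → ℝ := fun i => if h : i < n then |u ⟨i, h⟩| else 0 with hc_def
  set e : ℕ → ℝ := fun i => if h : i < n then (if 0 ≤ u ⟨i, h⟩ then 1 else -1) else 0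
    with he_def
  set wt : ℕ → Fin d → ℝ := fun i => if h : i < n then w ⟨i, h⟩ else fun _ => 0 with hwt_def
  set bt : ℕ → ℝ := fun i => if h : i < n then bs ⟨i, h⟩ else 0 with hbt_def
  set Cc : ℝ := 1 + ∑ i : Fin n, |u i| * (|bs i| + ∑ j, |w i j|) with hCc_def
  have hc : ∀ i, 0 ≤ c i := by
    intro i; simp only [hc_def]; split_ifs
    · exact abs_nonneg _
    · exact le_rfl
  -- the value of the accumulated sum
  have hAA : ∀ x' : Fin d → ℝ, S4.AA d e c wt bt n x'
      = ∑ i : Fin n, u i * relu ((∑ j, w i j * x' j) + bs i) := by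
    intro x'
    rw [S4.AA, ← Fin.sum_univ_eq_sum_range]
    apply Finset.sum_congr rfl
    intro i _
    have hi : (i : ℕ) < n := i.isLt
    simp only [S4.TT, S4.gg, hc_def, he_def, hwt_def, hbt_def, dif_pos hi, Fin.eta]
    rw [S4.relu_mul (abs_nonneg _)]
    rcases le_or_gt 0 (u i) with h | h
    · rw [if_pos h, abs_of_nonneg h]; ring
    · rw [if_neg (not_le.mpr h), abs_of_neg h]; ring
  -- nonnegativity of the shifted accumulator
  have hM : ∀ k, k ≤ n → ∀ x' : Fin d → ℝ,
      0 ≤ S4.MM d Cc x' + S4.AA d e c wt bt k x' := by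
    intro k hk x'
    set R := ∑ j, (relu (x' j) + relu (-(x' j))) with hR_def
    have hR : 0 ≤ R :=
      Finset.sum_nonneg fun j _ => add_nonneg (S4.relu_nonneg _) (S4.relu_nonneg _)
    set aa : ℕ → ℝ := fun i => c i * (|bt i| + ∑ j, |wt i j|) with haa_def
    have haa : ∀ i, 0 ≤ aa i := fun i => mul_nonneg (hc i)
      (add_nonneg (abs_nonneg _) (Finset.sum_nonneg fun j _ => abs_nonneg _))
    have hterm : ∀ i, -(aa i * (1 + R)) ≤ e i * S4.TT d c wt bt i x' := by
      intro i
      have hT0 : 0 ≤ S4.TT d c wt bt i x' := S4.relu_nonneg _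
      have hTle : S4.TT d c wt bt i x' ≤ aa i * (1 + R) := by
        have h1 : S4.TT d c wt bt i x' ≤ |c i * S4.gg d wt bt i x'| := S4.relu_le_abs _
        rw [abs_mul, abs_of_nonneg (hc i)] at h1
        have h2 : |S4.gg d wt bt i x'| ≤ |bt i| + ∑ j, |wt i j| * (1 + R) := by
          rw [S4.gg]
          calc |(∑ j, wt i j * x' j) + bt i|
              ≤ |∑ j, wt i j * x' j| + |bt i| := abs_add_le _ _
            _ ≤ (∑ j, |wt i j * x' j|) + |bt i| :=
                add_le_add_left (Finset.abs_sum_le_sum_abs _ _) _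
            _ ≤ (∑ j, |wt i j| * (1 + R)) + |bt i| := by
                have hle : ∀ j : Fin d, |wt i j * x' j| ≤ |wt i j| * (1 + R) := by
                  intro j
                  rw [abs_mul]
                  have hx : |x' j| ≤ 1 + R := by
                    rw [← S4.relu_add_relu_neg]
                    have := Finset.single_le_sum
                      (f := fun j => relu (x' j) + relu (-(x' j)))
                      (fun j _ => add_nonneg (S4.relu_nonneg _) (S4.relu_nonneg _))
                      (Finset.mem_univ j)
                    have h8 : relu (x' j) + relu (-(x' j)) ≤ R := this
                    linarith
                  exact mul_le_mul_of_nonneg_left hx (abs_nonneg _)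
                exact add_le_add_left (Finset.sum_le_sum (fun j _ => hle j)) _
            _ = |bt i| + ∑ j, |wt i j| * (1 + R) := by ring
        have h3 : (|bt i| + ∑ j, |wt i j| * (1 + R))
            ≤ (|bt i| + ∑ j, |wt i j|) * (1 + R) := by
          rw [← Finset.sum_mul]
          nlinarith [abs_nonneg (bt i), hR]
        calc S4.TT d c wt bt i x' ≤ c i * |S4.gg d wt bt i x'| := h1
          _ ≤ c i * ((|bt i| + ∑ j, |wt i j|) * (1 + R)) :=
              mul_le_mul_of_nonneg_left (h2.trans h3) (hc i)
          _ = aa i * (1 + R) := by rw [haa_def]; ring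
      have he1 : -1 ≤ e i := by simp only [he_def]; split_ifs <;> norm_num
      nlinarith
    have h5 : ∑ i ∈ Finset.range k, aa i ≤ Cc - 1 := by
      have h6 : ∑ i ∈ Finset.range k, aa i ≤ ∑ i ∈ Finset.range n, aa i :=
        Finset.sum_le_sum_of_subset_of_nonneg (Finset.range_subset_range.mpr hk)
          (fun i _ _ => haa i)
      have h7 : ∑ i ∈ Finset.range n, aa i = Cc - 1 := by
        rw [hCc_def, ← Fin.sum_univ_eq_sum_range]
        have hterm' : ∀ i : Fin n, aa (i : ℕ) = |u i| * (|bs i| + ∑ j, |w i j|) := by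
          intro i
          simp only [haa_def, hc_def, hbt_def, hwt_def, dif_pos i.isLt, Fin.eta]
        rw [Finset.sum_congr rfl (fun i _ => hterm' i)]
        ring
      linarith
    have h4 : -((∑ i ∈ Finset.range k, aa i) * (1 + R)) ≤ S4.AA d e c wt bt k x' := by
      have := Finset.sum_le_sum (s := Finset.range k)
        (fun i _ => hterm i)
      rw [S4.AA]
      calc -((∑ i ∈ Finset.range k, aa i) * (1 + R))
          = ∑ i ∈ Finset.range k, -(aa i * (1 + R)) := by
            rw [Finset.sum_neg_distrib, Finset.sum_mul]
        _ ≤ _ := this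
    have hMM : S4.MM d Cc x' = Cc * (1 + R) := by rw [S4.MM, hR_def]
    have hmul : (∑ i ∈ Finset.range k, aa i) * (1 + R) ≤ (Cc - 1) * (1 + R) :=
      mul_le_mul_of_nonneg_right h5 (by linarith)
    have hkey : Cc * (1 + R) - (Cc - 1) * (1 + R) = 1 + R := by ring
    linarith
  refine ⟨S4.fullNet d n e c wt bt Cc bstar, ?_, ?_, ?_⟩
  · show Net.depth _ = _
    rw [S4.fullNet, Net.depth, S4.chain_depth]
  · show Net.width _ ≤ _
    rw [S4.fullNet, Net.width, S4.chain_width]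
    omega
  · intro x
    have h0 := S4.chain_eval d n e c wt bt Cc bstar hn hc hM n le_rfl x
    rw [Nat.sub_self] at h0
    have hfirst : (fun o => relu ((S4.L1 d c wt bt).affine x o))
        = S4.blk (fun j => relu (x j)) (fun j => relu (-(x j)))
            (S4.TT d c wt bt 0 x) (S4.Acc d e c wt bt Cc 0 x) := by
      rw [S4.affine_L1]
      apply S4.funext_blk
      · intro j; rw [S4.blk_iP, S4.blk_iP]
      · intro j; rw [S4.blk_iQ, S4.blk_iQ]
      · rw [S4.blk_iT, S4.blk_iT]; rfl
      · rw [S4.blk_iA, S4.blk_iA, S4.Acc, if_pos rfl, S4.relu_zero]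
    show (S4.chain d n e c wt bt Cc bstar n).eval
        (fun o => relu ((S4.L1 d c wt bt).affine x o)) 0 = _
    rw [hfirst, h0, hAA x]
end

section
/- Let c, n₁, n₂ be positive integers; for every j ∈ {1,…,n₁} and i ∈ {1,…,n₂} let w_{i,j} ∈ ℕ with w_{i,j} < 2^c and α_{i,j} ∈ {−1,+1}, and for every i ∈ {1,…,n₂} let b_i ∈ ℕ with b_i < 2^c. Then there exist universal constants c₁, c₂ > 0 such that there is a ReLU network N : ℝ → ℝ of width at most 10, depth at most c₁ · n₁ n₂ c, and all weights bounded in absolute value by c₂ · 2^{n₁ c}, with the following property: for every x ∈ ℕ with x < 2^{c·n₁} such that |Σ_{j=1}^{n₁} α_{i,j} w_{i,j} · BIN_{(j−1)c+1 : jc}(x) + b_i| < 2^c for every i ∈ {1,…,n₂}, the value N(x) is a natural number and for every i ∈ {1,…,n₂}: BIN_{(i−1)c+1 : ic}(N(x)) = σ( Σ_{j=1}^{n₁} α_{i,j} w_{i,j} · BIN_{(j−1)c+1 : jc}(x) + b_i ), where σ(z) = max{0,z}. -/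
open scoped BigOperators

noncomputable section AuxNN
namespace AuxNN

open Finset

lemma relu_eq {A B : ℝ} (h1 : A = B) (h2 : 0 ≤ B) : max 0 A = B := by
  rw [h1]; exact max_eq_right h2

def v8 (a0 a1 a2 a3 a4 a5 a6 a7 : ℝ) : Fin 8 → ℝ := fun i =>
  match i with
  | ⟨0,_⟩ => a0 | ⟨1,_⟩ => a1 | ⟨2,_⟩ => a2 | ⟨3,_⟩ => a3
  | ⟨4,_⟩ => a4 | ⟨5,_⟩ => a5 | ⟨6,_⟩ => a6 | ⟨7,_⟩ => a7

@[simp] lemma v8_0 (a0 a1 a2 a3 a4 a5 a6 a7 : ℝ) : v8 a0 a1 a2 a3 a4 a5 a6 a7 0 = a0 := rfl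
@[simp] lemma v8_1 (a0 a1 a2 a3 a4 a5 a6 a7 : ℝ) : v8 a0 a1 a2 a3 a4 a5 a6 a7 1 = a1 := rfl
@[simp] lemma v8_2 (a0 a1 a2 a3 a4 a5 a6 a7 : ℝ) : v8 a0 a1 a2 a3 a4 a5 a6 a7 2 = a2 := rfl
@[simp] lemma v8_3 (a0 a1 a2 a3 a4 a5 a6 a7 : ℝ) : v8 a0 a1 a2 a3 a4 a5 a6 a7 3 = a3 := rfl
@[simp] lemma v8_4 (a0 a1 a2 a3 a4 a5 a6 a7 : ℝ) : v8 a0 a1 a2 a3 a4 a5 a6 a7 4 = a4 := rfl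
@[simp] lemma v8_5 (a0 a1 a2 a3 a4 a5 a6 a7 : ℝ) : v8 a0 a1 a2 a3 a4 a5 a6 a7 5 = a5 := rfl
@[simp] lemma v8_6 (a0 a1 a2 a3 a4 a5 a6 a7 : ℝ) : v8 a0 a1 a2 a3 a4 a5 a6 a7 6 = a6 := rfl
@[simp] lemma v8_7 (a0 a1 a2 a3 a4 a5 a6 a7 : ℝ) : v8 a0 a1 a2 a3 a4 a5 a6 a7 7 = a7 := rfl

lemma v8_congr {a0 a1 a2 a3 a4 a5 a6 a7 b0 b1 b2 b3 b4 b5 b6 b7 : ℝ}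
    (h0 : a0 = b0) (h1 : a1 = b1) (h2 : a2 = b2) (h3 : a3 = b3)
    (h4 : a4 = b4) (h5 : a5 = b5) (h6 : a6 = b6) (h7 : a7 = b7) :
    v8 a0 a1 a2 a3 a4 a5 a6 a7 = v8 b0 b1 b2 b3 b4 b5 b6 b7 := by
  subst h0 h1 h2 h3 h4 h5 h6 h7; rfl

def M8 (r0 r1 r2 r3 r4 r5 r6 r7 : Fin 8 → ℝ) : Fin 8 → Fin 8 → ℝ := fun i =>
  match i with
  | ⟨0,_⟩ => r0 | ⟨1,_⟩ => r1 | ⟨2,_⟩ => r2 | ⟨3,_⟩ => r3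
  | ⟨4,_⟩ => r4 | ⟨5,_⟩ => r5 | ⟨6,_⟩ => r6 | ⟨7,_⟩ => r7

def mkL (r : Fin 8 → Fin 8 → ℝ) (bv : Fin 8 → ℝ) : Layer 8 8 := ⟨Matrix.of r, bv⟩

def F (v : Fin 8 → ℝ) (l : Layer 8 8) : Fin 8 → ℝ := fun i => relu (l.affine v i)

lemma F_mk (r0 r1 r2 r3 r4 r5 r6 r7 : Fin 8 → ℝ) (b0 b1 b2 b3 b4 b5 b6 b7 : ℝ) (v : Fin 8 → ℝ) :
    F v (mkL (M8 r0 r1 r2 r3 r4 r5 r6 r7) (v8 b0 b1 b2 b3 b4 b5 b6 b7)) =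
    v8 (relu ((∑ j, r0 j * v j) + b0)) (relu ((∑ j, r1 j * v j) + b1))
       (relu ((∑ j, r2 j * v j) + b2)) (relu ((∑ j, r3 j * v j) + b3))
       (relu ((∑ j, r4 j * v j) + b4)) (relu ((∑ j, r5 j * v j) + b5))
       (relu ((∑ j, r6 j * v j) + b6)) (relu ((∑ j, r7 j * v j) + b7)) := by
  funext i; fin_cases i <;> rfl

/-! ### The concrete layers -/

def layerA (e : ℕ) : Layer 8 8 := mkL (M8
  (v8 1 0 0 0 0 0 0 0) (v8 0 1 0 0 0 0 0 0) (v8 0 0 1 0 0 0 0 0) (v8 0 0 0 1 0 0 0 0)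
  (v8 0 0 0 0 1 0 0 0) (v8 0 0 0 0 0 1 0 0) (v8 0 0 0 0 1 0 0 0) (v8 0 0 0 0 1 0 0 0))
  (v8 0 0 0 0 0 0 (-(2^e - 1)) (-(2^e)))

def layerB (e t : ℕ) : Layer 8 8 := mkL (M8
  (v8 1 0 0 0 0 0 0 0) (v8 0 1 0 0 0 0 0 0) (v8 0 0 1 0 0 0 0 0) (v8 0 0 0 1 0 0 0 0)
  (v8 0 0 0 0 1 0 (-(2^e)) (2^e)) (v8 0 0 0 0 0 1 (2^t) (-(2^t)))
  (v8 0 0 0 0 0 0 0 0) (v8 0 0 0 0 0 0 0 0))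
  (v8 0 0 0 0 0 0 0 0)

def layerFl (a : ℝ) : Layer 8 8 := mkL (M8
  (v8 1 0 0 0 0 0 0 0) (v8 0 1 0 0 0 0 0 0) (v8 0 0 1 (-1) 0 a 0 0) (v8 0 0 (-1) 1 0 (-a) 0 0)
  (v8 0 0 0 0 1 0 0 0) (v8 0 0 0 0 0 0 0 0) (v8 0 0 0 0 0 0 0 0) (v8 0 0 0 0 0 0 0 0))
  (v8 0 0 0 0 0 0 0 0)

def layerInit : Layer 8 8 := mkL (M8
  (v8 1 0 0 0 0 0 0 0) (v8 0 1 0 0 0 0 0 0) (v8 0 0 0 0 0 0 0 0) (v8 0 0 0 0 0 0 0 0)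
  (v8 1 0 0 0 0 0 0 0) (v8 0 0 0 0 0 0 0 0) (v8 0 0 0 0 0 0 0 0) (v8 0 0 0 0 0 0 0 0))
  (v8 0 0 0 0 0 0 0 0)

def layerG (β : ℝ) : Layer 8 8 := mkL (M8
  (v8 1 0 0 0 0 0 0 0) (v8 0 1 0 0 0 0 0 0) (v8 0 0 1 (-1) 0 0 0 0) (v8 0 0 0 0 0 0 0 0)
  (v8 0 0 0 0 0 0 0 0) (v8 0 0 0 0 0 0 0 0) (v8 0 0 0 0 0 0 0 0) (v8 0 0 0 0 0 0 0 0))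
  (v8 0 0 β 0 0 0 0 0)

def layerH (c : ℕ) : Layer 8 8 := mkL (M8
  (v8 1 0 0 0 0 0 0 0) (v8 0 (2^c) 1 0 0 0 0 0) (v8 0 0 0 0 0 0 0 0) (v8 0 0 0 0 0 0 0 0)
  (v8 0 0 0 0 0 0 0 0) (v8 0 0 0 0 0 0 0 0) (v8 0 0 0 0 0 0 0 0) (v8 0 0 0 0 0 0 0 0))
  (v8 0 0 0 0 0 0 0 0)

/-! ### Per-layer action lemmas -/

lemma F_layerA (e : ℕ) {x acc sp sm y B : ℝ} (hx : 0 ≤ x) (hacc : 0 ≤ acc) (hsp : 0 ≤ sp)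
    (hsm : 0 ≤ sm) (hy : 0 ≤ y) (hB : 0 ≤ B) (u v : ℝ) :
    F (v8 x acc sp sm y B u v) (layerA e) =
      v8 x acc sp sm y B (max 0 (y - (2^e - 1))) (max 0 (y - 2^e)) := by
  rw [layerA, F_mk]
  refine v8_congr ?_ ?_ ?_ ?_ ?_ ?_ ?_ ?_ <;>
    simp only [Fin.sum_univ_eight, v8_0, v8_1, v8_2, v8_3, v8_4, v8_5, v8_6, v8_7, relu] <;>
    first
      | (refine congrArg (max 0) ?_; ring)
      | (refine relu_eq (by ring) ?_; first | assumption | norm_num)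

lemma F_layerB (e t : ℕ) {x acc sp sm y B u v : ℝ} (hx : 0 ≤ x) (hacc : 0 ≤ acc) (hsp : 0 ≤ sp)
    (hsm : 0 ≤ sm) (h4 : 0 ≤ y - 2^e * (u - v)) (h5 : 0 ≤ B + 2^t * (u - v)) :
    F (v8 x acc sp sm y B u v) (layerB e t) =
      v8 x acc sp sm (y - 2^e * (u - v)) (B + 2^t * (u - v)) 0 0 := by
  rw [layerB, F_mk]
  refine v8_congr ?_ ?_ ?_ ?_ ?_ ?_ ?_ ?_ <;>
    simp only [Fin.sum_univ_eight, v8_0, v8_1, v8_2, v8_3, v8_4, v8_5, v8_6, v8_7, relu] <;>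
    (refine relu_eq (by ring) ?_; first | assumption | norm_num)

lemma F_layerFl (a : ℝ) {x acc sp sm y B u v : ℝ} (hx : 0 ≤ x) (hacc : 0 ≤ acc) (hy : 0 ≤ y) :
    F (v8 x acc sp sm y B u v) (layerFl a) =
      v8 x acc (max 0 (sp - sm + a * B)) (max 0 (-(sp - sm + a * B))) y 0 0 0 := by
  rw [layerFl, F_mk]
  refine v8_congr ?_ ?_ ?_ ?_ ?_ ?_ ?_ ?_ <;>
    simp only [Fin.sum_univ_eight, v8_0, v8_1, v8_2, v8_3, v8_4, v8_5, v8_6, v8_7, relu] <;>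
    first
      | (refine congrArg (max 0) ?_; ring)
      | (refine relu_eq (by ring) ?_; first | assumption | norm_num)

lemma F_layerInit {x acc : ℝ} (hx : 0 ≤ x) (hacc : 0 ≤ acc) (p q r s u v : ℝ) :
    F (v8 x acc p q r s u v) layerInit = v8 x acc 0 0 x 0 0 0 := by
  rw [layerInit, F_mk]
  refine v8_congr ?_ ?_ ?_ ?_ ?_ ?_ ?_ ?_ <;>
    simp only [Fin.sum_univ_eight, v8_0, v8_1, v8_2, v8_3, v8_4, v8_5, v8_6, v8_7, relu] <;>
    (refine relu_eq (by ring) ?_; first | assumption | norm_num)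

lemma F_layerG (β : ℝ) {x acc : ℝ} (hx : 0 ≤ x) (hacc : 0 ≤ acc) (sp sm y B u v : ℝ) :
    F (v8 x acc sp sm y B u v) (layerG β) =
      v8 x acc (max 0 (sp - sm + β)) 0 0 0 0 0 := by
  rw [layerG, F_mk]
  refine v8_congr ?_ ?_ ?_ ?_ ?_ ?_ ?_ ?_ <;>
    simp only [Fin.sum_univ_eight, v8_0, v8_1, v8_2, v8_3, v8_4, v8_5, v8_6, v8_7, relu] <;>
    first
      | (refine congrArg (max 0) ?_; ring)
      | (refine relu_eq (by ring) ?_; first | assumption | norm_num)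

lemma F_layerH (c : ℕ) {x acc sp : ℝ} (hx : 0 ≤ x) (hacc : 0 ≤ acc) (hsp : 0 ≤ sp)
    (sm y B u v : ℝ) :
    F (v8 x acc sp sm y B u v) (layerH c) =
      v8 x (2^c * acc + sp) 0 0 0 0 0 0 := by
  rw [layerH, F_mk]
  refine v8_congr ?_ ?_ ?_ ?_ ?_ ?_ ?_ ?_ <;>
    simp only [Fin.sum_univ_eight, v8_0, v8_1, v8_2, v8_3, v8_4, v8_5, v8_6, v8_7, relu] <;>
    (refine relu_eq (by ring) ?_; first | assumption | positivity | norm_num)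

/-! ### Bit arithmetic -/

lemma bit_diff (e y : ℕ) (hy : y < 2^(e+1)) :
    max 0 ((y:ℝ) - (2^e - 1)) - max 0 ((y:ℝ) - 2^e) = ((y / 2^e : ℕ) : ℝ) := by
  rcases lt_or_ge y (2^e) with h | h
  · have h1 : (y:ℝ) + 1 ≤ 2^e := by
      have h' : (y + 1 : ℕ) ≤ 2^e := h
      exact_mod_cast h'
    rw [Nat.div_eq_of_lt h, max_eq_left (by linarith), max_eq_left (by linarith)]
    simp
  · have hp : 2^(e+1) = 2 * 2^e := by rw [pow_succ]; ring
    have hd : y / 2^e = 1 := Nat.div_eq_of_lt_le (by simpa using h) (by omega)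
    have h2 : (2:ℝ)^e ≤ (y:ℝ) := by exact_mod_cast h
    rw [hd, max_eq_right (by linarith), max_eq_right (by linarith)]
    push_cast; ring

lemma msub (s : ℝ) : max 0 s - max 0 (-s) = s := by
  rcases le_total 0 s with h | h
  · rw [max_eq_right h, max_eq_left (by linarith)]; ring
  · rw [max_eq_left h, max_eq_right (by linarith)]; ring

lemma mod_div_mod (c : ℕ) {j t : ℕ} (hj : j < t) (y : ℕ) :
    y % 2^(t*c) / 2^(j*c) % 2^c = y / 2^(j*c) % 2^c := by
  have hle : j*c + c ≤ t*c := by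
    have h := Nat.mul_le_mul_right c (Nat.succ_le_of_lt hj)
    rw [Nat.succ_mul] at h; exact h
  have h1 : 2^(t*c) = 2^(j*c) * 2^(t*c - j*c) := by rw [← pow_add]; congr 1; omega
  rw [h1, Nat.mod_mul_right_div_self]
  exact Nat.mod_mod_of_dvd _ (pow_dvd_pow 2 (by omega))

/-! ### Lists of layers and their semantics -/

lemma pair_spec (e t : ℕ) {x acc sp sm : ℝ} (hx : 0 ≤ x) (hacc : 0 ≤ acc) (hsp : 0 ≤ sp)
    (hsm : 0 ≤ sm) (y B : ℕ) (hy : y < 2^(e+1)) (u v : ℝ) :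
    F (F (v8 x acc sp sm (y:ℝ) (B:ℝ) u v) (layerA e)) (layerB e t) =
      v8 x acc sp sm ((y % 2^e : ℕ):ℝ) ((B + (y / 2^e) * 2^t : ℕ):ℝ) 0 0 := by
  have hd := bit_diff e y hy
  have hml : (2:ℝ)^e * ((y / 2^e : ℕ):ℝ) ≤ (y:ℝ) := by
    have h := Nat.div_mul_le_self y (2^e)
    calc (2:ℝ)^e * ((y / 2^e : ℕ):ℝ) = ((y / 2^e * 2^e : ℕ) : ℝ) := by push_cast; ring
    _ ≤ (y:ℝ) := by exact_mod_cast h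
  rw [F_layerA e hx hacc hsp hsm (by positivity) (by positivity) u v]
  rw [F_layerB e t hx hacc hsp hsm (by rw [hd]; linarith) (by rw [hd]; positivity)]
  refine v8_congr rfl rfl rfl rfl ?_ ?_ rfl rfl
  · rw [hd]
    have hc : ((2^e * (y / 2^e) + y % 2^e : ℕ) : ℝ) = (y:ℝ) := by
      exact_mod_cast congrArg (Nat.cast : ℕ → ℝ) (Nat.div_add_mod y (2^e))
    push_cast at hc ⊢
    linarith
  · rw [hd]; push_cast; ring

def bitsL (base : ℕ) : ℕ → List (Layer 8 8)
  | 0 => []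
  | len+1 => layerA (base+len) :: layerB (base+len) len :: bitsL base len

lemma bitsL_spec (base len : ℕ) {x acc sp sm : ℝ} (hx : 0 ≤ x) (hacc : 0 ≤ acc)
    (hsp : 0 ≤ sp) (hsm : 0 ≤ sm) :
    ∀ (y B : ℕ), y < 2^(base+len) →
    List.foldl F (v8 x acc sp sm (y:ℝ) (B:ℝ) 0 0) (bitsL base len) =
      v8 x acc sp sm ((y % 2^base : ℕ):ℝ) ((B + y / 2^base : ℕ):ℝ) 0 0 := by
  induction len with
  | zero =>
      intro y B hy
      have hy' : y < 2^base := by simpa using hy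
      simp [bitsL, Nat.mod_eq_of_lt hy', Nat.div_eq_of_lt hy']
  | succ len ih =>
      intro y B hy
      have hy2 : y < 2^((base+len)+1) := hy
      rw [show bitsL base (len+1) = layerA (base+len) :: layerB (base+len) len :: bitsL base len
            from rfl,
          List.foldl_cons, List.foldl_cons,
          pair_spec (base+len) len hx hacc hsp hsm y B hy2 0 0,
          ih _ _ (Nat.mod_lt _ (by positivity))]
      have key : y / 2^base = y / 2^(base+len) * 2^len + y % 2^(base+len) / 2^base := by
        conv_lhs => rw [(Nat.div_add_mod y (2^(base+len))).symm]
        rw [pow_add, mul_assoc, Nat.mul_add_div (by positivity), Nat.mul_comm (2^len)]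
      refine v8_congr rfl rfl rfl rfl ?_ ?_ rfl rfl
      · exact_mod_cast congrArg (Nat.cast : ℕ → ℝ)
          (Nat.mod_mod_of_dvd y (pow_dvd_pow 2 (Nat.le_add_right base len)))
      · refine congrArg (Nat.cast : ℕ → ℝ) ?_
        rw [key, Nat.add_assoc]

def blocksL (g : ℕ → ℝ) (c : ℕ) : ℕ → List (Layer 8 8)
  | 0 => []
  | t+1 => bitsL (t*c) c ++ layerFl (g t) :: blocksL g c t

lemma blocksL_spec (g : ℕ → ℝ) (c : ℕ) {x acc : ℝ} (hx : 0 ≤ x) (hacc : 0 ≤ acc) (t : ℕ) :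
    ∀ (s : ℝ) (y : ℕ), y < 2^(t*c) →
    List.foldl F (v8 x acc (max 0 s) (max 0 (-s)) (y:ℝ) 0 0 0) (blocksL g c t) =
      v8 x acc (max 0 (s + ∑ j ∈ Finset.range t, g j * ((y / 2^(j*c) % 2^c : ℕ):ℝ)))
        (max 0 (-(s + ∑ j ∈ Finset.range t, g j * ((y / 2^(j*c) % 2^c : ℕ):ℝ)))) 0 0 0 0 := by
  induction t with
  | zero =>
      intro s y hy
      have hy0 : y = 0 := by simpa [Nat.lt_one_iff] using hy
      subst hy0
      simp [blocksL]
  | succ t ih =>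
      intro s y hy
      have hmul : (t+1)*c = t*c + c := by rw [Nat.succ_mul]
      have hlt : y < 2^(t*c + c) := by rwa [hmul] at hy
      have hstate : v8 x acc (max 0 s) (max 0 (-s)) (y:ℝ) (0:ℝ) 0 0
          = v8 x acc (max 0 s) (max 0 (-s)) (y:ℝ) (((0:ℕ):ℕ):ℝ) 0 0 := by norm_num
      rw [show blocksL g c (t+1) = bitsL (t*c) c ++ layerFl (g t) :: blocksL g c t from rfl,
          List.foldl_append, hstate,
          bitsL_spec (t*c) c hx hacc (le_max_left _ _) (le_max_left _ _) y 0 hlt,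
          List.foldl_cons,
          F_layerFl (g t) hx hacc (by positivity)]
      have hs1 : max 0 s - max 0 (-s) + g t * (((0:ℕ) + y / 2^(t*c) : ℕ):ℝ)
          = s + g t * ((y / 2^(t*c) : ℕ):ℝ) := by rw [msub]; norm_num
      rw [hs1, ih (s + g t * ((y / 2^(t*c) : ℕ):ℝ)) (y % 2^(t*c))
            (Nat.mod_lt _ (by positivity))]
      have hdiv : y / 2^(t*c) % 2^c = y / 2^(t*c) := by
        refine Nat.mod_eq_of_lt ?_
        rw [Nat.div_lt_iff_lt_mul (by positivity)]
        calc y < 2^(t*c + c) := hlt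
        _ = 2^c * 2^(t*c) := by rw [pow_add]; ring
      have hEq : s + g t * ((y / 2^(t*c) : ℕ):ℝ)
            + ∑ j ∈ Finset.range t, g j * ((y % 2^(t*c) / 2^(j*c) % 2^c : ℕ):ℝ)
          = s + ∑ j ∈ Finset.range (t+1), g j * ((y / 2^(j*c) % 2^c : ℕ):ℝ) := by
        rw [Finset.sum_range_succ, hdiv,
            show (∑ j ∈ Finset.range t, g j * ((y % 2^(t*c) / 2^(j*c) % 2^c : ℕ):ℝ))
              = ∑ j ∈ Finset.range t, g j * ((y / 2^(j*c) % 2^c : ℕ):ℝ) from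
              Finset.sum_congr rfl fun j hj => by
                rw [mod_div_mod c (Finset.mem_range.mp hj) y]]
        ring
      rw [hEq]

def stageL (g : ℕ → ℝ) (β : ℝ) (c n₁ : ℕ) : List (Layer 8 8) :=
  layerInit :: (blocksL g c n₁ ++ [layerG β, layerH c])

lemma stageL_spec (g : ℕ → ℝ) (β : ℝ) (c n₁ : ℕ) {acc : ℝ} (hacc : 0 ≤ acc)
    (x : ℕ) (hx : x < 2^(n₁*c)) (p q r s' u v : ℝ) :
    List.foldl F (v8 (x:ℝ) acc p q r s' u v) (stageL g β c n₁) =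
      v8 (x:ℝ) (2^c * acc
          + max 0 ((∑ j ∈ Finset.range n₁, g j * ((x / 2^(j*c) % 2^c : ℕ):ℝ)) + β))
        0 0 0 0 0 0 := by
  have hx0 : (0:ℝ) ≤ (x:ℝ) := by positivity
  rw [stageL, List.foldl_cons, F_layerInit hx0 hacc p q r s' u v]
  rw [show v8 (x:ℝ) acc 0 0 (x:ℝ) 0 0 0
      = v8 (x:ℝ) acc (max 0 0) (max 0 (-(0:ℝ))) (x:ℝ) 0 0 0 by norm_num]
  rw [List.foldl_append, blocksL_spec g c hx0 hacc n₁ 0 x hx]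
  rw [List.foldl_cons, F_layerG β hx0 hacc _ _ _ _ _ _,
      List.foldl_cons, F_layerH c hx0 hacc (le_max_left _ _) _ _ _ _ _,
      List.foldl_nil]
  refine v8_congr rfl ?_ rfl rfl rfl rfl rfl rfl
  rw [msub]
  norm_num

def stagesL (Gf : ℕ → ℕ → ℝ) (βf : ℕ → ℝ) (c n₁ : ℕ) : ℕ → List (Layer 8 8)
  | 0 => []
  | t+1 => stageL (Gf t) (βf t) c n₁ ++ stagesL Gf βf c n₁ t

lemma stagesL_spec (Gf : ℕ → ℕ → ℝ) (βf : ℕ → ℝ) (c n₁ : ℕ) (x : ℕ) (hx : x < 2^(n₁*c))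
    (t : ℕ) : ∀ {acc : ℝ}, 0 ≤ acc →
    List.foldl F (v8 (x:ℝ) acc 0 0 0 0 0 0) (stagesL Gf βf c n₁ t) =
      v8 (x:ℝ) (acc * 2^(t*c) + ∑ i ∈ Finset.range t, 2^(i*c)
          * max 0 ((∑ j ∈ Finset.range n₁, Gf i j * ((x / 2^(j*c) % 2^c : ℕ):ℝ)) + βf i))
        0 0 0 0 0 0 := by
  induction t with
  | zero => intro acc hacc; simp [stagesL]
  | succ t ih =>
      intro acc hacc
      have hnn : (0:ℝ) ≤ 2^c * acc
          + max 0 ((∑ j ∈ Finset.range n₁, Gf t j * ((x / 2^(j*c) % 2^c : ℕ):ℝ)) + βf t) :=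
        add_nonneg (mul_nonneg (by positivity) hacc) (le_max_left _ _)
      rw [show stagesL Gf βf c n₁ (t+1) = stageL (Gf t) (βf t) c n₁ ++ stagesL Gf βf c n₁ t
            from rfl,
          List.foldl_append, stageL_spec (Gf t) (βf t) c n₁ hacc x hx _ _ _ _ _ _,
          ih hnn]
      refine v8_congr rfl ?_ rfl rfl rfl rfl rfl rfl
      rw [Finset.sum_range_succ,
          show (2:ℝ)^((t+1)*c) = 2^(t*c) * 2^c by rw [← pow_add, Nat.succ_mul]]
      ring


/-! ### Assembling the network -/

def chain : List (Layer 8 8) → Layer 8 1 → Net 8 1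
  | [], out => .last out
  | l :: ls, out => .cons l (chain ls out)

lemma chain_eval (ls : List (Layer 8 8)) (out : Layer 8 1) (v : Fin 8 → ℝ) :
    (chain ls out).eval v = out.affine (List.foldl F v ls) := by
  induction ls generalizing v with
  | nil => rfl
  | cons l ls ih =>
      show (chain ls out).eval (fun i => relu (l.affine v i)) = _
      rw [List.foldl_cons]
      exact ih (F v l)

lemma chain_depth (ls : List (Layer 8 8)) (out : Layer 8 1) :
    (chain ls out).depth = ls.length + 1 := by
  induction ls with
  | nil => rfl
  | cons l ls ih => show (chain ls out).depth + 1 = _; rw [ih]; simp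

lemma chain_width (ls : List (Layer 8 8)) (out : Layer 8 1) :
    (chain ls out).width = 8 := by
  induction ls with
  | nil => rfl
  | cons l ls ih => show max 8 (chain ls out).width = 8; rw [ih]; simp

def inL : Layer 1 8 := ⟨Matrix.of fun i _ => v8 1 0 0 0 0 0 0 0 i, fun _ => 0⟩
def outL : Layer 8 1 := ⟨Matrix.of fun _ j => v8 0 1 0 0 0 0 0 0 j, fun _ => 0⟩

def theNet (ls : List (Layer 8 8)) : Net 1 1 := .cons inL (chain ls outL)

lemma theNet_eval (ls : List (Layer 8 8)) (x : ℝ) (hx : 0 ≤ x) :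
    (theNet ls).eval (fun _ => x) 0 = (List.foldl F (v8 x 0 0 0 0 0 0 0) ls) 1 := by
  show (chain ls outL).eval (fun i => relu (inL.affine (fun _ => x) i)) 0 = _
  have hst : (fun i => relu (inL.affine (fun _ => x) i)) = v8 x 0 0 0 0 0 0 0 := by
    funext i
    fin_cases i <;>
      simp [inL, Layer.affine, relu, v8, Matrix.of_apply, max_eq_right hx]
  rw [hst, chain_eval]
  simp [outL, Layer.affine, Matrix.of_apply, Fin.sum_univ_eight]

lemma theNet_depth (ls : List (Layer 8 8)) : (theNet ls).depth = ls.length + 2 := by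
  show (chain ls outL).depth + 1 = _
  rw [chain_depth]

lemma theNet_width (ls : List (Layer 8 8)) : (theNet ls).width = 8 := by
  show max 1 (chain ls outL).width = 8
  rw [chain_width]; norm_num

/-! ### Lengths -/

lemma bitsL_length (base len : ℕ) : (bitsL base len).length = 2*len := by
  induction len with
  | zero => rfl
  | succ len ih => show (bitsL base len).length + 1 + 1 = _; omega

lemma blocksL_length (g : ℕ → ℝ) (c t : ℕ) : (blocksL g c t).length = t * (2*c+1) := by
  induction t with
  | zero => simp [blocksL]
  | succ t ih =>
      show (bitsL (t*c) c ++ layerFl (g t) :: blocksL g c t).length = _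
      rw [List.length_append, bitsL_length, List.length_cons, ih]
      ring

lemma stageL_length (g : ℕ → ℝ) (β : ℝ) (c n₁ : ℕ) :
    (stageL g β c n₁).length = n₁*(2*c+1) + 3 := by
  show (blocksL g c n₁ ++ [layerG β, layerH c]).length + 1 = _
  rw [List.length_append, blocksL_length]
  simp

lemma stagesL_length (Gf : ℕ → ℕ → ℝ) (βf : ℕ → ℝ) (c n₁ t : ℕ) :
    (stagesL Gf βf c n₁ t).length = t * (n₁*(2*c+1) + 3) := by
  induction t with
  | zero => simp [stagesL]
  | succ t ih =>
      show (stageL (Gf t) (βf t) c n₁ ++ stagesL Gf βf c n₁ t).length = _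
      rw [List.length_append, stageL_length, ih]
      ring

/-! ### Weight bounds -/

def good (R : ℝ) (l : Layer 8 8) : Prop :=
  (∀ i j, l.W i j ∈ Set.Icc (-R) R) ∧ (∀ i, l.b i ∈ Set.Icc (-R) R)

lemma chain_weightsIn (R : ℝ) (ls : List (Layer 8 8)) (out : Layer 8 1)
    (h : ∀ l ∈ ls, good R l)
    (hout : (∀ i j, out.W i j ∈ Set.Icc (-R) R) ∧ (∀ i, out.b i ∈ Set.Icc (-R) R)) :
    (chain ls out).weightsIn (Set.Icc (-R) R) := by
  induction ls with
  | nil => exact hout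
  | cons l ls ih =>
      exact ⟨h l List.mem_cons_self, ih fun l' hl' => h l' (List.mem_cons_of_mem _ hl')⟩

lemma good_layerA (R : ℝ) (h1 : 1 ≤ R) (e : ℕ) (hp : (2:ℝ)^e ≤ R) :
    good R (layerA e) := by
  have he : (0:ℝ) < 2^e := by positivity
  constructor
  · intro i j
    fin_cases i <;> fin_cases j <;>
      simp [layerA, mkL, M8, v8, Set.mem_Icc] <;> (try constructor) <;> linarith
  · intro i
    fin_cases i <;>
      simp [layerA, mkL, M8, v8, Set.mem_Icc] <;> (try constructor) <;> linarith

lemma good_layerB (R : ℝ) (h1 : 1 ≤ R) (e t : ℕ) (hp : (2:ℝ)^e ≤ R) (ht : (2:ℝ)^t ≤ R) :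
    good R (layerB e t) := by
  have he : (0:ℝ) < 2^e := by positivity
  have he' : (0:ℝ) < 2^t := by positivity
  constructor
  · intro i j
    fin_cases i <;> fin_cases j <;>
      simp [layerB, mkL, M8, v8, Set.mem_Icc] <;> (try constructor) <;> linarith
  · intro i
    fin_cases i <;>
      simp [layerB, mkL, M8, v8, Set.mem_Icc] <;> (try constructor) <;> linarith

lemma good_layerFl (R : ℝ) (h1 : 1 ≤ R) (a : ℝ) (ha : |a| ≤ R) :
    good R (layerFl a) := by
  obtain ⟨ha1, ha2⟩ := abs_le.mp ha
  constructor
  · intro i j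
    fin_cases i <;> fin_cases j <;>
      simp [layerFl, mkL, M8, v8, Set.mem_Icc] <;> (try constructor) <;> linarith
  · intro i
    fin_cases i <;>
      simp [layerFl, mkL, M8, v8, Set.mem_Icc] <;> (try constructor) <;> linarith

lemma good_layerInit (R : ℝ) (h1 : 1 ≤ R) : good R layerInit := by
  constructor
  · intro i j
    fin_cases i <;> fin_cases j <;>
      simp [layerInit, mkL, M8, v8, Set.mem_Icc] <;> (try constructor) <;> linarith
  · intro i
    fin_cases i <;>
      simp [layerInit, mkL, M8, v8, Set.mem_Icc] <;> (try constructor) <;> linarith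

lemma good_layerG (R : ℝ) (h1 : 1 ≤ R) (β : ℝ) (hβ : |β| ≤ R) : good R (layerG β) := by
  obtain ⟨hb1, hb2⟩ := abs_le.mp hβ
  constructor
  · intro i j
    fin_cases i <;> fin_cases j <;>
      simp [layerG, mkL, M8, v8, Set.mem_Icc] <;> (try constructor) <;> linarith
  · intro i
    fin_cases i <;>
      simp [layerG, mkL, M8, v8, Set.mem_Icc] <;> (try constructor) <;> linarith

lemma good_layerH (R : ℝ) (h1 : 1 ≤ R) (c : ℕ) (hc : (2:ℝ)^c ≤ R) : good R (layerH c) := by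
  have he : (0:ℝ) < 2^c := by positivity
  constructor
  · intro i j
    fin_cases i <;> fin_cases j <;>
      simp [layerH, mkL, M8, v8, Set.mem_Icc] <;> (try constructor) <;> linarith
  · intro i
    fin_cases i <;>
      simp [layerH, mkL, M8, v8, Set.mem_Icc] <;> (try constructor) <;> linarith

lemma good_bitsL (R : ℝ) (h1 : 1 ≤ R) (base len : ℕ)
    (h : ∀ k, k ≤ base + len → (2:ℝ)^k ≤ R) :
    ∀ l ∈ bitsL base len, good R l := by
  induction len with
  | zero => intro l hl; simp [bitsL] at hl
  | succ len ih =>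
      intro l hl
      rw [show bitsL base (len+1) = layerA (base+len) :: layerB (base+len) len :: bitsL base len
            from rfl] at hl
      rcases List.mem_cons.mp hl with rfl | hl
      · exact good_layerA R h1 _ (h _ (by omega))
      rcases List.mem_cons.mp hl with rfl | hl
      · exact good_layerB R h1 _ _ (h _ (by omega)) (h _ (by omega))
      · exact ih (fun k hk => h k (by omega)) l hl

lemma good_blocksL (R : ℝ) (h1 : 1 ≤ R) (g : ℕ → ℝ) (c t : ℕ)
    (hpow : ∀ k, k ≤ t*c → (2:ℝ)^k ≤ R) (hg : ∀ j, j < t → |g j| ≤ R) :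
    ∀ l ∈ blocksL g c t, good R l := by
  induction t with
  | zero => intro l hl; simp [blocksL] at hl
  | succ t ih =>
      intro l hl
      rw [show blocksL g c (t+1) = bitsL (t*c) c ++ layerFl (g t) :: blocksL g c t from rfl]
        at hl
      have hmul : (t+1)*c = t*c + c := Nat.succ_mul t c
      rcases List.mem_append.mp hl with hl | hl
      · exact good_bitsL R h1 (t*c) c (fun k hk => hpow k (by omega)) l hl
      rcases List.mem_cons.mp hl with rfl | hl
      · exact good_layerFl R h1 _ (hg t (by omega))
      · refine ih (fun k hk => hpow k ?_) (fun j hj => hg j (by omega)) l hl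
        calc k ≤ t*c := hk
        _ ≤ (t+1)*c := by omega

lemma good_stageL (R : ℝ) (h1 : 1 ≤ R) (g : ℕ → ℝ) (β : ℝ) (c n₁ : ℕ)
    (hpow : ∀ k, k ≤ n₁*c → (2:ℝ)^k ≤ R) (hg : ∀ j, j < n₁ → |g j| ≤ R)
    (hβ : |β| ≤ R) (hc : (2:ℝ)^c ≤ R) :
    ∀ l ∈ stageL g β c n₁, good R l := by
  intro l hl
  rw [stageL] at hl
  rcases List.mem_cons.mp hl with rfl | hl
  · exact good_layerInit R h1
  rcases List.mem_append.mp hl with hl | hl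
  · exact good_blocksL R h1 g c n₁ hpow hg l hl
  rcases List.mem_cons.mp hl with rfl | hl
  · exact good_layerG R h1 β hβ
  rcases List.mem_cons.mp hl with rfl | hl
  · exact good_layerH R h1 c hc
  · simp at hl

lemma good_stagesL (R : ℝ) (h1 : 1 ≤ R) (Gf : ℕ → ℕ → ℝ) (βf : ℕ → ℝ) (c n₁ t : ℕ)
    (hpow : ∀ k, k ≤ n₁*c → (2:ℝ)^k ≤ R) (hg : ∀ i j, i < t → j < n₁ → |Gf i j| ≤ R)
    (hβ : ∀ i, i < t → |βf i| ≤ R) (hc : (2:ℝ)^c ≤ R) :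
    ∀ l ∈ stagesL Gf βf c n₁ t, good R l := by
  induction t with
  | zero => intro l hl; simp [stagesL] at hl
  | succ t ih =>
      intro l hl
      rw [show stagesL Gf βf c n₁ (t+1) = stageL (Gf t) (βf t) c n₁ ++ stagesL Gf βf c n₁ t
            from rfl] at hl
      rcases List.mem_append.mp hl with hl | hl
      · exact good_stageL R h1 (Gf t) (βf t) c n₁ hpow
          (fun j hj => hg t j (by omega) hj) (hβ t (by omega)) hc l hl
      · exact ih (fun i j hi hj => hg i j (by omega) hj) (fun i hi => hβ i (by omega)) l hl

lemma theNet_weightsIn (R : ℝ) (h1 : 1 ≤ R) (ls : List (Layer 8 8))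
    (h : ∀ l ∈ ls, good R l) :
    (theNet ls).weightsIn (Set.Icc (-R) R) := by
  refine ⟨⟨?_, ?_⟩, chain_weightsIn R ls outL h ⟨?_, ?_⟩⟩
  · intro i j
    fin_cases i <;> fin_cases j <;>
      simp [inL, v8, Set.mem_Icc] <;> (try constructor) <;> linarith
  · intro i
    fin_cases i <;> simp [inL, Set.mem_Icc] <;> (try constructor) <;> linarith
  · intro i j
    fin_cases i <;> fin_cases j <;>
      simp [outL, v8, Set.mem_Icc] <;> (try constructor) <;> linarith
  · intro i
    fin_cases i <;> simp [outL, Set.mem_Icc] <;> (try constructor) <;> linarith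

/-! ### Digit extraction -/

lemma sum_bound (c : ℕ) (f : ℕ → ℕ) (hf : ∀ i, f i < 2^c) :
    ∀ i, (∑ i' ∈ Finset.range i, f i' * 2^(i'*c)) < 2^(i*c) := by
  intro i
  induction i with
  | zero => simp
  | succ i ih =>
      rw [Finset.sum_range_succ]
      have h1 : f i ≤ 2^c - 1 := by have := hf i; omega
      have h2 : 2^((i+1)*c) = 2^c * 2^(i*c) := by
        rw [← pow_add]; congr 1; rw [Nat.succ_mul]; omega
      have hone : 1 ≤ 2^c := Nat.one_le_two_pow
      calc (∑ i' ∈ Finset.range i, f i' * 2^(i'*c)) + f i * 2^(i*c)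
          < 2^(i*c) + f i * 2^(i*c) := by omega
      _ ≤ 2^(i*c) + (2^c - 1) * 2^(i*c) := by
          have := Nat.mul_le_mul_right (2^(i*c)) h1; omega
      _ = (1 + (2^c - 1)) * 2^(i*c) := by rw [Nat.add_mul, Nat.one_mul]
      _ = 2^c * 2^(i*c) := by congr 1; omega
      _ = 2^((i+1)*c) := h2.symm

lemma digit_extract (c : ℕ) (f : ℕ → ℕ) (hf : ∀ i, f i < 2^c) (n i : ℕ) (hi : i < n) :
    (∑ i' ∈ Finset.range n, f i' * 2^(i'*c)) / 2^(i*c) % 2^c = f i := by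
  obtain ⟨k, rfl⟩ : ∃ k, n = (i+1) + k := ⟨n - (i+1), by omega⟩
  have htail : ∀ k', ∃ T, ∑ i' ∈ Finset.range ((i+1) + k'), f i' * 2^(i'*c)
      = (∑ i' ∈ Finset.range (i+1), f i' * 2^(i'*c)) + 2^((i+1)*c) * T := by
    intro k'
    induction k' with
    | zero => exact ⟨0, by simp⟩
    | succ k' ih =>
        obtain ⟨T, hT⟩ := ih
        refine ⟨T + f ((i+1)+k') * 2^(k'*c), ?_⟩
        rw [show (i+1)+(k'+1) = ((i+1)+k')+1 from rfl, Finset.sum_range_succ, hT,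
            show ((i+1)+k')*c = (i+1)*c + k'*c by rw [Nat.add_mul], pow_add]
        ring
  obtain ⟨T, hT⟩ := htail k
  rw [hT, Finset.sum_range_succ]
  have hA := sum_bound c f hf i
  have h2 : 2^((i+1)*c) = 2^(i*c) * 2^c := by
    rw [← pow_add]; congr 1; rw [Nat.succ_mul]
  rw [show (∑ i' ∈ Finset.range i, f i' * 2^(i'*c)) + f i * 2^(i*c) + 2^((i+1)*c) * T
      = (∑ i' ∈ Finset.range i, f i' * 2^(i'*c)) + 2^(i*c) * (f i + 2^c * T) by
        rw [h2]; ring]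
  rw [Nat.add_mul_div_left _ _ (by positivity), Nat.div_eq_of_lt hA, Nat.zero_add,
      Nat.add_mul_mod_self_left, Nat.mod_eq_of_lt (hf i)]


/-! ### Interface to BIN and the data of the theorem -/

lemma BIN_eq (c : ℕ) (hc : 0 < c) (a x : ℕ) :
    BIN (a*c+1) ((a+1)*c) x = x / 2^(a*c) % 2^c := by
  have h2 : (a+1)*c - (a*c+1) + 1 = c := by
    have h := Nat.add_mul a 1 c; omega
  rw [show BIN (a*c+1) ((a+1)*c) x = x / 2^(a*c+1-1) % 2^((a+1)*c - (a*c+1) + 1) from rfl,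
      show a*c+1-1 = a*c from rfl, h2]

def GfD (n₂ n₁ : ℕ) (α : Fin n₂ → Fin n₁ → ℝ) (w : Fin n₂ → Fin n₁ → ℕ) : ℕ → ℕ → ℝ :=
  fun i j => if h : i < n₂ ∧ j < n₁ then α ⟨i, h.1⟩ ⟨j, h.2⟩ * (w ⟨i, h.1⟩ ⟨j, h.2⟩ : ℝ) else 0

def βfD (n₂ : ℕ) (b : Fin n₂ → ℕ) : ℕ → ℝ :=
  fun i => if h : i < n₂ then (b ⟨i, h⟩ : ℝ) else 0


end AuxNN
end AuxNN
theorem stmt8 :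
    ∃ c₁ c₂ : ℝ, 0 < c₁ ∧ 0 < c₂ ∧
    ∀ (c n₁ n₂ : ℕ), 0 < c → 0 < n₁ → 0 < n₂ →
    ∀ (w : Fin n₂ → Fin n₁ → ℕ) (α : Fin n₂ → Fin n₁ → ℝ) (b : Fin n₂ → ℕ),
      (∀ i j, w i j < 2^c) → (∀ i j, α i j = 1 ∨ α i j = -1) → (∀ i, b i < 2^c) →
    ∃ N : Net 1 1,
      N.width ≤ 10 ∧
      (N.depth : ℝ) ≤ c₁ * ((n₁ : ℝ) * n₂ * c) ∧
      N.weightsIn (Set.Icc (-(c₂ * 2^(n₁ * c))) (c₂ * 2^(n₁ * c))) ∧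
      ∀ x : ℕ, x < 2^(c * n₁) →
        (∀ i : Fin n₂,
          |(∑ j : Fin n₁,
            α i j * (w i j : ℝ) * (BIN ((j : ℕ) * c + 1) (((j : ℕ) + 1) * c) x : ℝ)) + (b i : ℝ)|
            < 2^c) →
        ∃ m : ℕ, N.eval (fun _ => (x : ℝ)) 0 = (m : ℝ) ∧
          ∀ i : Fin n₂,
            (BIN ((i : ℕ) * c + 1) (((i : ℕ) + 1) * c) m : ℝ) =
              relu ((∑ j : Fin n₁,
                α i j * (w i j : ℝ) * (BIN ((j : ℕ) * c + 1) (((j : ℕ) + 1) * c) x : ℝ))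
                + (b i : ℝ)) := by
  refine ⟨100, 1, by norm_num, by norm_num, ?_⟩
  intro c n₁ n₂ hc hn₁ hn₂ w α b hw hα hb
  set R : ℝ := 2^(n₁*c) with hRdef
  have h1R : (1:ℝ) ≤ R := one_le_pow₀ (by norm_num)
  have hpow : ∀ k, k ≤ n₁*c → (2:ℝ)^k ≤ R := fun k hk =>
    pow_le_pow_right₀ (by norm_num) hk
  have hcK : c ≤ n₁*c := Nat.le_mul_of_pos_left c hn₁
  have hwR : ∀ (i : Fin n₂) (j : Fin n₁), |α i j * (w i j : ℝ)| ≤ R := by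
    intro i j
    have h1 : |α i j| = 1 := by rcases hα i j with h | h <;> rw [h] <;> norm_num
    rw [abs_mul, h1, one_mul, abs_of_nonneg (by positivity)]
    have h2 : (w i j : ℝ) < 2^c := by exact_mod_cast hw i j
    have h3 := hpow c hcK
    linarith
  have hbR : ∀ i : Fin n₂, |(b i : ℝ)| ≤ R := by
    intro i
    rw [abs_of_nonneg (by positivity)]
    have h2 : (b i : ℝ) < 2^c := by exact_mod_cast hb i
    have h3 := hpow c hcK
    linarith
  refine ⟨AuxNN.theNet (AuxNN.stagesL (AuxNN.GfD n₂ n₁ α w) (AuxNN.βfD n₂ b) c n₁ n₂),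
    ?_, ?_, ?_, ?_⟩
  · rw [AuxNN.theNet_width]; norm_num
  · rw [AuxNN.theNet_depth, AuxNN.stagesL_length]
    have e1 : n₁*n₂ ≤ n₁*n₂*c := Nat.le_mul_of_pos_right _ hc
    have e2 : n₂ ≤ n₁*n₂ := Nat.le_mul_of_pos_left _ hn₁
    have e3 : 0 < n₁*n₂*c := by positivity
    have e4 : n₂*(n₁*(2*c+1)+3) = 2*(n₁*n₂*c) + n₁*n₂ + 3*n₂ := by ring
    have e5 : n₂*(n₁*(2*c+1)+3) + 2 ≤ 100*(n₁*n₂*c) := by omega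
    calc (↑(n₂*(n₁*(2*c+1)+3) + 2) : ℝ) ≤ ↑(100*(n₁*n₂*c)) := by exact_mod_cast e5
    _ = 100 * ((n₁:ℝ)*n₂*c) := by push_cast; ring
  · rw [show (1:ℝ) * 2^(n₁*c) = R by rw [one_mul]]
    refine AuxNN.theNet_weightsIn R h1R _ ?_
    refine AuxNN.good_stagesL R h1R _ _ c n₁ n₂ hpow ?_ ?_ (hpow c hcK)
    · intro i j hi hj
      simp only [AuxNN.GfD]
      rw [dif_pos ⟨hi, hj⟩]
      exact hwR _ _
    · intro i hi
      simp only [AuxNN.βfD]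
      rw [dif_pos hi]
      exact hbR _
  · intro x hx hS
    have hxK : x < 2^(n₁*c) := by rwa [Nat.mul_comm c n₁] at hx
    have hSmatch : ∀ (i : ℕ) (hi : i < n₂),
        (∑ j ∈ Finset.range n₁,
            AuxNN.GfD n₂ n₁ α w i j * ((x / 2^(j*c) % 2^c : ℕ):ℝ)) + AuxNN.βfD n₂ b i
        = (∑ j : Fin n₁, α ⟨i,hi⟩ j * ((w ⟨i,hi⟩ j : ℕ):ℝ)
            * ((BIN ((j:ℕ)*c+1) (((j:ℕ)+1)*c) x : ℕ):ℝ)) + ((b ⟨i,hi⟩ : ℕ):ℝ) := by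
      intro i hi
      congr 1
      · rw [← Fin.sum_univ_eq_sum_range
            (fun j => AuxNN.GfD n₂ n₁ α w i j * ((x / 2^(j*c) % 2^c : ℕ):ℝ)) n₁]
        refine Finset.sum_congr rfl fun j _ => ?_
        rw [AuxNN.BIN_eq c hc (j:ℕ) x]
        simp only [AuxNN.GfD]
        rw [dif_pos ⟨hi, j.isLt⟩]
      · simp only [AuxNN.βfD]
        rw [dif_pos hi]
    have key : ∀ i : Fin n₂, ∃ mi : ℕ, (mi:ℝ) =
        max 0 ((∑ j : Fin n₁, α i j * ((w i j : ℕ):ℝ)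
          * ((BIN ((j:ℕ)*c+1) (((j:ℕ)+1)*c) x : ℕ):ℝ)) + ((b i : ℕ):ℝ)) ∧ mi < 2^c := by
      intro i
      set zi : ℤ := (∑ j : Fin n₁, (if α i j = 1 then (1:ℤ) else -1) * (w i j : ℤ)
        * ((BIN ((j:ℕ)*c+1) (((j:ℕ)+1)*c) x : ℕ):ℤ)) + (b i : ℤ) with hzi
      have hcast : ((zi:ℤ):ℝ) = (∑ j : Fin n₁, α i j * ((w i j : ℕ):ℝ)
          * ((BIN ((j:ℕ)*c+1) (((j:ℕ)+1)*c) x : ℕ):ℝ)) + ((b i : ℕ):ℝ) := by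
        rw [hzi]
        push_cast
        congr 1
        refine Finset.sum_congr rfl fun j _ => ?_
        rcases hα i j with h | h <;> rw [h] <;> norm_num
      have habs : |zi| < 2^c := by
        have h := hS i
        rw [← hcast] at h
        exact_mod_cast h
      have habs2 := abs_lt.mp habs
      refine ⟨zi.toNat, ?_, ?_⟩
      · rw [← hcast]
        rcases le_total zi 0 with h | h
        · have h0 : ((zi:ℤ):ℝ) ≤ 0 := by exact_mod_cast h
          rw [max_eq_left h0]
          simp [Int.toNat_of_nonpos h]
        · have h0 : (0:ℝ) ≤ ((zi:ℤ):ℝ) := by exact_mod_cast h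
          rw [max_eq_right h0]
          exact_mod_cast congrArg (Int.cast : ℤ → ℝ) (Int.toNat_of_nonneg h)
      · have h2 : zi < (2:ℤ)^c := habs2.2
        have h3 : ((2^c : ℕ) : ℤ) = (2:ℤ)^c := by push_cast; ring
        omega
    choose mfun hm1 hm2 using key
    set mf : ℕ → ℕ := fun i => if h : i < n₂ then mfun ⟨i,h⟩ else 0 with hmfdef
    have hmf : ∀ i, mf i < 2^c := by
      intro i
      simp only [hmfdef]
      by_cases h : i < n₂
      · rw [dif_pos h]; exact hm2 _
      · rw [dif_neg h]; positivity
    refine ⟨∑ i ∈ Finset.range n₂, mf i * 2^(i*c), ?_, ?_⟩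
    · rw [AuxNN.theNet_eval _ _ (by positivity)]
      rw [AuxNN.stagesL_spec (AuxNN.GfD n₂ n₁ α w) (AuxNN.βfD n₂ b) c n₁ x hxK n₂ le_rfl]
      rw [AuxNN.v8_1, zero_mul, zero_add]
      push_cast
      refine Finset.sum_congr rfl fun i hi => ?_
      have hi' := Finset.mem_range.mp hi
      rw [hSmatch i hi', ← hm1 ⟨i, hi'⟩]
      rw [show mf i = mfun ⟨i, hi'⟩ by simp only [hmfdef]; rw [dif_pos hi']]
      ring
    · intro i
      rw [AuxNN.BIN_eq c hc (i:ℕ) _,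
          AuxNN.digit_extract c mf hmf n₂ (i:ℕ) i.isLt,
          show mf (i:ℕ) = mfun i by simp only [hmfdef]; rw [dif_pos i.isLt]]
      exact hm1 i
end

section
/- Let a, a₀, n be positive integers with a₀ < a. Then there exist universal constants c₁, c₂ > 0 such that there is a ReLU network N : ℝ → ℝ of width at most 7, depth at most c₁ · n·a, and all weights bounded in absolute value by c₂ · 2^{n·a}, with the following property: for every x ∈ ℕ with x < 2^{a·n}, the value N(x) is a natural number and for every j ∈ {1,…,n}: BIN_{(j−1)a+1 : ja}(N(x)) = ⌊ BIN_{(j−1)a+1 : ja}(x) · 2^{−a₀} ⌋. -/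
open scoped BigOperators

namespace Stmt9

variable (a a₀ : ℕ)

/-- output weight of bit `p`. -/
def wgt (p : ℕ) : ℕ := if a₀ ≤ p % a then 2^(p/a * a + (p % a - a₀)) else 0

/-- value accumulated by processing bits `k-1, …, 0`. -/
def F : ℕ → ℕ → ℕ
  | 0, _ => 0
  | (k+1), y => (if 2^k ≤ y then wgt a a₀ k else 0) + F k (y % 2^k)

def G : ℕ → ℕ → ℕ
  | 0, _ => 0
  | (j+1), y => 2^(j*a) * ((y / 2^(j*a)) / 2^a₀) + G j (y % 2^(j*a))

lemma wgt_le (p : ℕ) : wgt a a₀ p ≤ 2^p := by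
  unfold wgt
  split
  · refine Nat.pow_le_pow_right (by norm_num) ?_
    have h1 := Nat.div_add_mod' p a
    have h2 : p % a - a₀ ≤ p % a := Nat.sub_le _ _
    omega
  · positivity

lemma wgt_eq (j r : ℕ) (hra : r < a) :
    wgt a a₀ (j*a + r) = if a₀ ≤ r then 2^(j*a + (r - a₀)) else 0 := by
  have ha : 0 < a := lt_of_le_of_lt (Nat.zero_le _) hra
  have hmod : (j*a + r) % a = r := by
    rw [Nat.add_comm, Nat.mul_comm, Nat.add_mul_mod_self_left, Nat.mod_eq_of_lt hra]
  have hdiv : (j*a + r) / a = j := by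
    rw [Nat.add_comm, Nat.mul_comm, Nat.add_mul_div_left _ _ ha, Nat.div_eq_of_lt hra,
      Nat.zero_add]
  rw [wgt, hmod, hdiv]

lemma F_block (j r : ℕ) (hr : r ≤ a) : ∀ y : ℕ, y < 2^(j*a + r) →
    F a a₀ (j*a + r) y = 2^(j*a) * ((y / 2^(j*a)) / 2^a₀) + F a a₀ (j*a) (y % 2^(j*a)) := by
  induction r with
  | zero =>
    intro y hy
    simp only [Nat.add_zero] at *
    rw [Nat.div_eq_of_lt hy, Nat.mod_eq_of_lt hy]
    simp
  | succ r ih =>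
    intro y hy
    have hra : r < a := hr
    have h2 : (0:ℕ) < 2^(j*a) := Nat.pow_pos (by norm_num)
    have key : F a a₀ (j*a + (r+1)) y
        = (if 2^(j*a+r) ≤ y then wgt a a₀ (j*a+r) else 0) + F a a₀ (j*a+r) (y % 2^(j*a+r)) := rfl
    set z := y % 2^(j*a+r) with hz
    have hzlt : z < 2^(j*a+r) := Nat.mod_lt _ (Nat.pow_pos (by norm_num))
    have ihz := ih (le_of_lt hra) z hzlt
    have hzm : z % 2^(j*a) = y % 2^(j*a) :=
      Nat.mod_mod_of_dvd y (pow_dvd_pow 2 (Nat.le_add_right _ r))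
    by_cases hb : 2^(j*a+r) ≤ y
    · have hy2 : y < 2^(j*a+r) * 2 := by
        rw [← pow_succ]; exact hy
      have hzval : z = y - 2^(j*a+r) := by
        rw [hz, Nat.mod_eq_sub_mod hb, Nat.mod_eq_of_lt (by omega)]
      -- y / 2^(j*a) = z / 2^(j*a) + 2^r
      have hyz : y = z + 2^(j*a) * 2^r := by
        rw [← pow_add]; omega
      have hq : y / 2^(j*a) = z / 2^(j*a) + 2^r := by
        rw [hyz, Nat.add_mul_div_left _ _ h2]
      have hqlt : z / 2^(j*a) < 2^r := by
        rw [Nat.div_lt_iff_lt_mul h2, Nat.mul_comm, ← pow_add]; exact hzlt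
      rw [key, if_pos hb, ihz, hzm, hq, wgt_eq a a₀ j r hra]
      by_cases ha0 : a₀ ≤ r
      · rw [if_pos ha0]
        have : (z / 2^(j*a) + 2^r) / 2^a₀ = z / 2^(j*a) / 2^a₀ + 2^(r-a₀) := by
          have : (2:ℕ)^r = 2^a₀ * 2^(r-a₀) := by rw [← pow_add]; congr 1; omega
          rw [this, Nat.add_mul_div_left _ _ (Nat.pow_pos (by norm_num))]
        rw [this, Nat.mul_add, ← pow_add]
        ring
      · rw [if_neg ha0]
        have hr2 : (2:ℕ)^(r+1) ≤ 2^a₀ := Nat.pow_le_pow_right (by norm_num) (by omega)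
        have e1 : (z / 2^(j*a) + 2^r) / 2^a₀ = 0 := by
          apply Nat.div_eq_of_lt
          have : (2:ℕ)^(r+1) = 2^r * 2 := pow_succ 2 r
          omega
        have e2 : z / 2^(j*a) / 2^a₀ = 0 := by
          apply Nat.div_eq_of_lt
          have : (2:ℕ)^(r+1) = 2^r * 2 := pow_succ 2 r
          omega
        rw [e1, e2]
        simp
    · push_neg at hb
      have hzy : z = y := Nat.mod_eq_of_lt hb
      rw [key, if_neg (by omega), ihz, hzm, hzy]
      simp

lemma F_eq_G : ∀ j y, y < 2^(j*a) → F a a₀ (j*a) y = G a a₀ j y := by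
  intro j
  induction j with
  | zero => intro y hy; rw [Nat.zero_mul]; rfl
  | succ j ih =>
    intro y hy
    have h1 : (j+1)*a = j*a + a := by ring
    have hylt : y < 2^(j*a + a) := by rwa [← h1]
    have := F_block a a₀ j a (le_refl a) y hylt
    rw [h1, this, G]
    congr 1
    exact ih _ (Nat.mod_lt _ (Nat.pow_pos (by norm_num)))

lemma G_lt : ∀ j y, y < 2^(j*a) → G a a₀ j y < 2^(j*a) := by
  intro j
  induction j with
  | zero => intro y hy; simpa [G] using Nat.one_pos
  | succ j ih =>
    intro y hy
    have h2 : (0:ℕ) < 2^(j*a) := Nat.pow_pos (by norm_num)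
    have hq : y / 2^(j*a) < 2^a := by
      rw [Nat.div_lt_iff_lt_mul h2, Nat.mul_comm, ← pow_add]
      have : (j+1)*a = j*a + a := by ring
      rwa [this] at hy
    have hH : (y / 2^(j*a)) / 2^a₀ + 1 ≤ 2^a := by
      have := Nat.div_le_self (y / 2^(j*a)) (2^a₀)
      omega
    have hrec : G a a₀ j (y % 2^(j*a)) < 2^(j*a) :=
      ih _ (Nat.mod_lt _ h2)
    have : G a a₀ (j+1) y < 2^(j*a) * ((y / 2^(j*a)) / 2^a₀ + 1) := by
      rw [G, Nat.mul_add, Nat.mul_one]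
      omega
    calc G a a₀ (j+1) y < 2^(j*a) * ((y / 2^(j*a)) / 2^a₀ + 1) := this
      _ ≤ 2^(j*a) * 2^a := Nat.mul_le_mul_left _ hH
      _ = 2^((j+1)*a) := by rw [← pow_add]; ring_nf


lemma G_block : ∀ n j y, j < n → y < 2^(n*a) →
    G a a₀ n y / 2^(j*a) % 2^a = (y / 2^(j*a) % 2^a) / 2^a₀ := by
  intro n
  induction n with
  | zero => intro j y hj; omega
  | succ n ih =>
    intro j y hj hy
    have h2n : (0:ℕ) < 2^(n*a) := Nat.pow_pos (by norm_num)
    have h2j : (0:ℕ) < 2^(j*a) := Nat.pow_pos (by norm_num)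
    have h2a : (0:ℕ) < 2^a := Nat.pow_pos (by norm_num)
    have hrec : G a a₀ n (y % 2^(n*a)) < 2^(n*a) := G_lt a a₀ n _ (Nat.mod_lt _ h2n)
    have hG : G a a₀ (n+1) y = G a a₀ n (y % 2^(n*a)) + 2^(n*a) * (y / 2^(n*a) / 2^a₀) := by
      rw [G]; ring
    rcases Nat.lt_or_ge j n with hjn | hjn
    · -- j < n
      obtain ⟨d, hd⟩ : ∃ d, n = j + (d+1) := ⟨n - j - 1, by omega⟩
      have hsplit : (2:ℕ)^(n*a) = 2^(j*a) * 2^((d+1)*a) := by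
        rw [← pow_add]; congr 1; rw [hd]; ring
      have hdiv : G a a₀ (n+1) y / 2^(j*a)
          = G a a₀ n (y % 2^(n*a)) / 2^(j*a) + 2^((d+1)*a) * (y / 2^(n*a) / 2^a₀) := by
        rw [hG, hsplit, Nat.mul_assoc, Nat.add_mul_div_left _ _ h2j]
      have hmul : (2:ℕ)^((d+1)*a) = 2^a * 2^(d*a) := by
        rw [← pow_add]; congr 1; ring
      have hmod : G a a₀ (n+1) y / 2^(j*a) % 2^a
          = G a a₀ n (y % 2^(n*a)) / 2^(j*a) % 2^a := by
        rw [hdiv, hmul, Nat.mul_assoc, Nat.mul_comm ((2:ℕ)^a)]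
        exact Nat.add_mul_mod_self_right _ _ _
      have hx : (y % 2^(n*a)) / 2^(j*a) % 2^a = y / 2^(j*a) % 2^a := by
        have h1 : (y % 2^(n*a)) / 2^(j*a) = y / 2^(j*a) % 2^((d+1)*a) := by
          rw [hsplit]; exact Nat.mod_mul_right_div_self y _ _
        rw [h1, Nat.mod_mod_of_dvd]
        refine pow_dvd_pow 2 ?_
        have : a ≤ (d+1)*a := Nat.le_mul_of_pos_left a (by omega)
        exact this
      rw [hmod, ih j _ hjn (Nat.mod_lt _ h2n), hx]
    · -- j = n
      have hjeq : j = n := by omega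
      subst hjeq
      have hq : y / 2^(j*a) < 2^a := by
        rw [Nat.div_lt_iff_lt_mul h2j, Nat.mul_comm, ← pow_add]
        have : (j+1)*a = j*a + a := by ring
        rwa [this] at hy
      have hdiv : G a a₀ (j+1) y / 2^(j*a) = y / 2^(j*a) / 2^a₀ := by
        rw [hG, Nat.add_mul_div_left _ _ h2j, Nat.div_eq_of_lt hrec, Nat.zero_add]
      rw [hdiv, Nat.mod_eq_of_lt hq]
      congr 1
      apply Nat.mod_eq_of_lt
      calc y / 2^(j*a) / 2^a₀ ≤ y / 2^(j*a) := Nat.div_le_self _ _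
        _ < 2^a := hq


def L1 (p : ℕ) : Layer 2 4 :=
  ⟨!![1,0;1,0;1,0;0,1], ![-((2:ℝ)^p - 1), -((2:ℝ)^p), 0, 0]⟩

def L2 (p w : ℕ) : Layer 4 2 :=
  ⟨!![-((2:ℝ)^p), (2:ℝ)^p, 1, 0; (w:ℝ), -(w:ℝ), 0, 1], ![0,0]⟩

def outL : Layer 2 1 := ⟨!![0,1], ![0]⟩

def inL : Layer 1 2 := ⟨!![1;0], ![0,0]⟩

def netK : ℕ → Net 2 1
  | 0 => .last outL
  | (k+1) => .cons (L1 k) (.cons (L2 k (wgt a a₀ k)) (netK k))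

lemma relu_eq_of {A B : ℝ} (h : A = B) (hB : 0 ≤ B) : relu A = B := by
  rw [relu, h]; exact max_eq_right hB

lemma relu_eq_zero_of {A : ℝ} (h : A ≤ 0) : relu A = 0 := max_eq_left h

lemma netK_eval (k : ℕ) : ∀ (y out : ℕ), y < 2^k →
    (netK a a₀ k).eval ![(y:ℝ), (out:ℝ)] 0 = ((out + F a a₀ k y : ℕ) : ℝ) := by
  induction k with
  | zero =>
    intro y out hy
    show (Net.last (outL)).eval _ 0 = _
    simp [Net.eval, Layer.affine, outL, Fin.sum_univ_two, F]
  | succ k ih =>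
    intro y out hy
    have h2 : (0:ℝ) < 2^k := by positivity
    show ((netK a a₀ k).eval (fun i => relu ((L2 k (wgt a a₀ k)).affine
        (fun i => relu ((L1 k).affine ![(y:ℝ), (out:ℝ)] i)) i))) 0 = _
    by_cases hb : 2^k ≤ y
    · have hbc : (2:ℝ)^k ≤ (y:ℝ) := by exact_mod_cast (Nat.cast_le (α := ℝ)).2 hb
      have hv1 : (fun i => relu ((L1 k).affine ![(y:ℝ), (out:ℝ)] i))
          = ![(y:ℝ) - ((2:ℝ)^k - 1), (y:ℝ) - (2:ℝ)^k, (y:ℝ), (out:ℝ)] := by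
        funext i
        fin_cases i
        · exact relu_eq_of (by simp [L1, Layer.affine, Fin.sum_univ_two]; ring)
            (by simp; linarith)
        · exact relu_eq_of (by simp [L1, Layer.affine, Fin.sum_univ_two]; ring)
            (by simp; linarith)
        · exact relu_eq_of (by simp [L1, Layer.affine, Fin.sum_univ_two])
            (by simp)
        · exact relu_eq_of (by simp [L1, Layer.affine, Fin.sum_univ_two])
            (by simp)
      have hy' : y - 2^k < 2^k := by
        have h1 : y < 2^(k+1) := hy
        have h2 : (2:ℕ)^(k+1) = 2^k * 2 := pow_succ 2 k
        omega
      have hmod : y % 2^k = y - 2^k := by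
        rw [Nat.mod_eq_sub_mod hb, Nat.mod_eq_of_lt hy']
      have hv2 : (fun i => relu ((L2 k (wgt a a₀ k)).affine
          ![(y:ℝ) - ((2:ℝ)^k - 1), (y:ℝ) - (2:ℝ)^k, (y:ℝ), (out:ℝ)] i))
          = ![((y - 2^k : ℕ):ℝ), ((out + wgt a a₀ k : ℕ):ℝ)] := by
        funext i
        fin_cases i
        · refine relu_eq_of ?_ ?_
          · simp [L2, Layer.affine, Fin.sum_univ_four]
            push_cast [Nat.cast_sub hb]
            ring
          · simp
        · refine relu_eq_of ?_ ?_
          · simp [L2, Layer.affine, Fin.sum_univ_four]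
            push_cast
            ring
          · simp only [Matrix.cons_val_one, Matrix.head_cons]
            exact Nat.cast_nonneg _
      rw [hv1, hv2, ih _ _ hy']
      congr 1
      have : F a a₀ (k+1) y = wgt a a₀ k + F a a₀ k (y - 2^k) := by
        rw [F, if_pos hb, hmod]
      omega
    · push_neg at hb
      have hbc : (y:ℝ) < (2:ℝ)^k := by exact_mod_cast (Nat.cast_lt (α := ℝ)).2 hb
      have hbc1 : (y:ℝ) + 1 ≤ (2:ℝ)^k := by exact_mod_cast Nat.succ_le_of_lt hb
      have hv1 : (fun i => relu ((L1 k).affine ![(y:ℝ), (out:ℝ)] i))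
          = ![0, 0, (y:ℝ), (out:ℝ)] := by
        funext i
        fin_cases i
        · refine relu_eq_zero_of ?_
          simp [L1, Layer.affine, Fin.sum_univ_two]
          linarith
        · refine relu_eq_zero_of ?_
          simp [L1, Layer.affine, Fin.sum_univ_two]
          linarith
        · exact relu_eq_of (by simp [L1, Layer.affine, Fin.sum_univ_two]) (by simp)
        · exact relu_eq_of (by simp [L1, Layer.affine, Fin.sum_univ_two]) (by simp)
      have hv2 : (fun i => relu ((L2 k (wgt a a₀ k)).affine
          ![0, 0, (y:ℝ), (out:ℝ)] i))
          = ![(y:ℝ), (out:ℝ)] := by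
        funext i
        fin_cases i
        · exact relu_eq_of (by simp [L2, Layer.affine, Fin.sum_univ_four]) (by simp)
        · exact relu_eq_of (by simp [L2, Layer.affine, Fin.sum_univ_four]) (by simp)
      rw [hv1, hv2, ih _ _ hb]
      congr 1
      have : F a a₀ (k+1) y = F a a₀ k y := by
        rw [F, if_neg (by omega), Nat.mod_eq_of_lt hb]
        omega
      omega


def fullNet (n : ℕ) : Net 1 1 := .cons inL (netK a a₀ (n*a))

lemma netK_width (k : ℕ) : (netK a a₀ k).width ≤ 4 := by
  induction k with
  | zero => simp [netK, Net.width, outL]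
  | succ k ih =>
    show (Net.cons (L1 k) (Net.cons (L2 k (wgt a a₀ k)) (netK a a₀ k))).width ≤ 4
    simp only [Net.width]
    omega

lemma netK_depth (k : ℕ) : (netK a a₀ k).depth = 2*k + 1 := by
  induction k with
  | zero => rfl
  | succ k ih =>
    show (Net.cons (L1 k) (Net.cons (L2 k (wgt a a₀ k)) (netK a a₀ k))).depth = _
    simp only [Net.depth, ih]
    omega

lemma netK_weights (M : ℕ) : ∀ k, k ≤ M →
    (netK a a₀ k).weightsIn (Set.Icc (-(2^M:ℝ)) (2^M)) := by
  have h1 : (1:ℝ) ≤ 2^M := one_le_pow₀ (by norm_num)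
  intro k
  induction k with
  | zero =>
    intro _
    refine ⟨?_, ?_⟩
    · intro i j
      fin_cases i <;> fin_cases j <;> simp [outL, Set.mem_Icc] <;> constructor <;> linarith
    · intro i
      fin_cases i <;> simp [outL, Set.mem_Icc] <;> constructor <;> linarith
  | succ k ih =>
    intro hk
    have h2 : (2:ℝ)^k ≤ 2^M := by
      apply pow_le_pow_right₀ (by norm_num) (by omega)
    have h2' : (0:ℝ) < 2^k := by positivity
    have hw : ((wgt a a₀ k : ℕ):ℝ) ≤ 2^M := by
      calc ((wgt a a₀ k : ℕ):ℝ) ≤ ((2^k:ℕ):ℝ) := Nat.cast_le.2 (wgt_le a a₀ k)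
        _ = (2:ℝ)^k := by push_cast; ring
        _ ≤ 2^M := h2
    have hw0 : (0:ℝ) ≤ ((wgt a a₀ k : ℕ):ℝ) := Nat.cast_nonneg _
    show (Net.cons (L1 k) (Net.cons (L2 k (wgt a a₀ k)) (netK a a₀ k))).weightsIn _
    refine ⟨⟨?_, ?_⟩, ⟨?_, ?_⟩, ih (by omega)⟩
    · intro i j
      fin_cases i <;> fin_cases j <;> simp [L1, Set.mem_Icc] <;> constructor <;> linarith
    · intro i
      fin_cases i <;> simp [L1, Set.mem_Icc] <;> constructor <;> linarith
    · intro i j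
      fin_cases i <;> fin_cases j <;> simp [L2, Set.mem_Icc] <;> constructor <;> linarith
    · intro i
      fin_cases i <;> simp [L2, Set.mem_Icc] <;> constructor <;> linarith

lemma fullNet_eval (n x : ℕ) (hx : x < 2^(n*a)) :
    (fullNet a a₀ n).eval (fun _ => (x:ℝ)) 0 = ((F a a₀ (n*a) x : ℕ) : ℝ) := by
  have hv : (fun i => relu ((inL).affine (fun _ => (x:ℝ)) i)) = ![(x:ℝ), ((0:ℕ):ℝ)] := by
    funext i
    fin_cases i
    · exact relu_eq_of (by simp [inL, Layer.affine, Fin.sum_univ_one]) (by simp)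
    · exact relu_eq_of (by simp [inL, Layer.affine, Fin.sum_univ_one]) (by simp)
  show (netK a a₀ (n*a)).eval (fun i => relu ((inL).affine (fun _ => (x:ℝ)) i)) 0 = _
  rw [hv, netK_eval a a₀ (n*a) x 0 hx]
  norm_num

end Stmt9

theorem stmt9 :
    ∃ c₁ c₂ : ℝ, 0 < c₁ ∧ 0 < c₂ ∧
    ∀ (a a₀ n : ℕ), 0 < a₀ → a₀ < a → 0 < n →
    ∃ N : Net 1 1,
      N.width ≤ 7 ∧
      (N.depth : ℝ) ≤ c₁ * ((n : ℝ) * a) ∧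
      N.weightsIn (Set.Icc (-(c₂ * 2^(n * a))) (c₂ * 2^(n * a))) ∧
      ∀ x : ℕ, x < 2^(a * n) →
        ∃ m : ℕ, N.eval (fun _ => (x : ℝ)) 0 = (m : ℝ) ∧
          ∀ j : Fin n,
            BIN ((j : ℕ) * a + 1) (((j : ℕ) + 1) * a) m =
              BIN ((j : ℕ) * a + 1) (((j : ℕ) + 1) * a) x / 2^a₀ := by
  refine ⟨4, 1, by norm_num, by norm_num, ?_⟩
  intro a a₀ n ha₀ haa hn
  have ha : 0 < a := lt_trans ha₀ haa
  refine ⟨Stmt9.fullNet a a₀ n, ?_, ?_, ?_, ?_⟩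
  · -- width
    show (max 1 (Stmt9.netK a a₀ (n*a)).width) ≤ 7
    have := Stmt9.netK_width a a₀ (n*a)
    omega
  · -- depth
    show (((Stmt9.netK a a₀ (n*a)).depth + 1 : ℕ) : ℝ) ≤ _
    rw [Stmt9.netK_depth]
    have hna : (1:ℕ) ≤ n * a := Nat.mul_pos hn ha
    have h1 : ((n*a : ℕ):ℝ) ≥ 1 := by exact_mod_cast hna
    push_cast at h1 ⊢
    linarith
  · -- weights
    rw [one_mul]
    have hmain := Stmt9.netK_weights a a₀ (n*a) (n*a) le_rfl
    have h1 : (1:ℝ) ≤ 2^(n*a) := one_le_pow₀ (by norm_num)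
    refine ⟨⟨?_, ?_⟩, hmain⟩
    · intro i j
      fin_cases i <;> fin_cases j <;> simp [Stmt9.inL, Set.mem_Icc] <;>
        constructor <;> linarith
    · intro i
      fin_cases i <;> simp [Stmt9.inL, Set.mem_Icc] <;> constructor <;> linarith
  · -- evaluation
    intro x hx
    have hx' : x < 2^(n*a) := by rwa [Nat.mul_comm a n] at hx
    refine ⟨Stmt9.F a a₀ (n*a) x, Stmt9.fullNet_eval a a₀ n x hx', ?_⟩
    intro j
    have hj : (j : ℕ) < n := j.2
    have hidx1 : (j : ℕ) * a + 1 - 1 = (j : ℕ) * a := rfl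
    have hidx2 : ((j : ℕ) + 1) * a - ((j : ℕ) * a + 1) + 1 = a := by
      have : ((j:ℕ)+1)*a = (j:ℕ)*a + a := by ring
      omega
    rw [BIN, BIN, hidx1, hidx2]
    rw [Stmt9.F_eq_G a a₀ n x hx', Stmt9.G_block a a₀ n (j:ℕ) x hj hx']
end
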